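/- arXiv:2004.11101 — 5 statements merged into one kernel-verified Lean document; each statement's English description precedes it below -/
import Mathlib

section
/- For each real number u ≥ 2 let X_u := ⋃_{n=1}^∞ [2^{u^n}, 2^{u^n} + u^n] ⊆ ℝ. If 2 ≤ v < w are real numbers, then there is no uniformly continuous bijection from X_v onto X_w (with respect to the metric inherited from ℝ). -/
/-!
Each `X_u` is a disjoint union of compact intervals separated by gaps, so a continuous map
`F : X_v → X_w` maps every interval of `X_v` into a single interval of `X_w`. By Sierpiński's
theorem (a compact interval is not a countable disjoint union of two or more nonempty closed
subintervals) a bijection must map the `n`-th interval of `X_v` onto some `m(n)`-th interval of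
`X_w`, and distinct `n` give distinct `m(n)`. Uniform continuity makes `F` coarsely Lipschitz,
so `w ^ m(n) ≲ v ^ n`; as `v < w`, the injection `m` would send `{0, …, M}` into `{0, …, M - 1}`
for large `M`.
-/

/-- The set `X_u = ⋃_{n≥1} [2^{uⁿ}, 2^{uⁿ} + uⁿ]`. -/
noncomputable def Xu (u : ℝ) : Set ℝ :=
  ⋃ n ∈ Set.Ici (1 : ℕ), Set.Icc ((2 : ℝ) ^ (u ^ n)) ((2 : ℝ) ^ (u ^ n) + u ^ n)

open Set Function

theorem IsClosed.exists_isolated_of_countable {α : Type*} [MetricSpace α] [CompleteSpace α]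
    {C : Set α} (hC : IsClosed C) (hct : C.Countable) (hne : C.Nonempty) :
    ∃ x ∈ C, ∃ ε > 0, ∀ y ∈ C, dist y x < ε → y = x := by
  have : CompleteSpace C := hC.completeSpace_coe
  have : Countable C := hct.to_subtype
  have : Nonempty C := hne.to_subtype
  obtain ⟨x, y, hy⟩ := nonempty_interior_of_iUnion_of_closed (fun x : C => isClosed_singleton)
    (iUnion_of_singleton C)
  obtain rfl : y = x := mem_singleton_iff.1 (interior_subset hy)
  obtain ⟨ε, hε, hball⟩ := Metric.isOpen_iff.1 isOpen_interior y hy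
  exact ⟨y, y.2, ε, hε, fun z hz hzy => congrArg Subtype.val <| mem_singleton_iff.1 <|
    interior_subset (hball (show (⟨z, hz⟩ : C) ∈ Metric.ball y ε from hzy))⟩

theorem IsPreconnected.exists_subset_of_pairwiseDisjoint {α ι : Type*} [TopologicalSpace α]
    {P : Set α} {S : Set ι} {U : ι → Set α} (hP : IsPreconnected P) (hPne : P.Nonempty)
    (hU : ∀ i ∈ S, IsOpen (U i)) (hdisj : S.PairwiseDisjoint U) (hPU : P ⊆ ⋃ i ∈ S, U i) :
    ∃ i ∈ S, P ⊆ U i := by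
  obtain ⟨x, hx⟩ := hPne
  obtain ⟨i, hi, hxi⟩ := mem_iUnion₂.1 (hPU hx)
  refine ⟨i, hi, hP.subset_left_of_subset_union (v := ⋃ j ∈ S \ {i}, U j) (hU i hi)
    (isOpen_biUnion fun j hj => hU j hj.1)
    (disjoint_iUnion₂_right.2 fun j hj => hdisj hi hj.1 (Ne.symm hj.2)) ?_ ⟨x, hx, hxi⟩⟩
  intro y hy
  obtain ⟨j, hj, hyj⟩ := mem_iUnion₂.1 (hPU hy)
  by_cases hji : j = i
  · exact Or.inl (hji ▸ hyj)
  · exact Or.inr (mem_iUnion₂.2 ⟨j, ⟨hj, hji⟩, hyj⟩)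

theorem Convex.dist_map_le_of_forall_dist_lt {E β : Type*} [NormedAddCommGroup E]
    [NormedSpace ℝ E] [PseudoMetricSpace β] {g : E → β} {s : Set E} (hs : Convex ℝ s)
    {δ ε : ℝ} (hδ : 0 < δ) (hg : ∀ x ∈ s, ∀ y ∈ s, dist x y < δ → dist (g x) (g y) ≤ ε)
    {x y : E} (hx : x ∈ s) (hy : y ∈ s) : dist (g x) (g y) ≤ ε * (dist x y / δ + 1) := by
  have hε : 0 ≤ ε := dist_self (g x) ▸ hg x hx x hx (by simpa using hδ)
  set N := ⌊dist x y / δ⌋₊ + 1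
  have hN : (0 : ℝ) < N := by positivity
  -- `N` steps of length `dist x y / N < δ` along the segment from `x` to `y`
  set p : ℕ → E := fun i => x + ((i : ℝ) / N) • (y - x)
  have hp : ∀ i ≤ N, p i ∈ s := fun i hi =>
    hs.add_smul_sub_mem hx hy ⟨by positivity, div_le_one_of_le₀ (by exact_mod_cast hi) hN.le⟩
  have hstep : ∀ i, dist (p i) (p (i + 1)) < δ := fun i => by
    have : p (i + 1) = p i + (N : ℝ)⁻¹ • (y - x) := by
      simp only [p, Nat.cast_succ]
      module
    rw [this, dist_self_add_right, norm_smul, norm_inv, Real.norm_of_nonneg hN.le, ← dist_eq_norm',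
      inv_mul_eq_div, div_lt_iff₀ hN, mul_comm, ← div_lt_iff₀ hδ]
    exact_mod_cast Nat.lt_floor_add_one (dist x y / δ)
  calc dist (g x) (g y) = dist (g (p 0)) (g (p N)) := by
        simp [p, hN.ne']
    _ ≤ ∑ i ∈ Finset.range N, dist (g (p i)) (g (p (i + 1))) :=
        dist_le_range_sum_dist (fun i => g (p i)) N
    _ ≤ ∑ _i ∈ Finset.range N, ε := Finset.sum_le_sum fun i hi => by
        have hi := Finset.mem_range.1 hi
        exact hg _ (hp i hi.le) _ (hp (i + 1) hi) (hstep i)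
    _ = ε * N := by simp [mul_comm]
    _ ≤ ε * (dist x y / δ + 1) := by
        gcongr
        simpa [N] using Nat.floor_le (div_nonneg dist_nonneg hδ.le)

theorem exists_bijOn_uniformContinuousOn {α β : Type*} [UniformSpace α] [UniformSpace β]
    [Nonempty β] {s : Set α} {t : Set β} {f : s → t} (hf : Bijective f)
    (huc : UniformContinuous f) : ∃ F : α → β, BijOn F s t ∧ UniformContinuousOn F s := by
  set F := extend Subtype.val (fun x => (f x : β)) fun _ => Classical.arbitrary β
  have hF : ∀ x : s, F x = f x := Subtype.val_injective.extend_apply _ _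
  refine ⟨F, ⟨fun x hx => ?_, fun x hx y hy h => ?_, fun y hy => ?_⟩, ?_⟩
  · exact hF ⟨x, hx⟩ ▸ (f ⟨x, hx⟩).2
  · rw [hF ⟨x, hx⟩, hF ⟨y, hy⟩] at h
    exact congrArg Subtype.val (hf.1 (Subtype.ext h))
  · obtain ⟨x, hx⟩ := hf.2 ⟨y, hy⟩
    exact ⟨x, x.2, by rw [hF, hx]⟩
  · rw [uniformContinuousOn_iff_restrict, show s.domRestrict F = Subtype.val ∘ f from funext hF]
    exact uniformContinuous_subtype_val.comp huc

theorem not_injective_of_pow_le {v w K : ℝ} (hv : 1 ≤ v) (hvw : v < w) {m : ℕ → ℕ}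
    (hm : ∀ n, w ^ m n ≤ K * v ^ n) : ¬ Injective m := by
  intro hinj
  have hK : 0 ≤ K := by
    simpa using (pow_pos (by linarith : 0 < w) (m 0)).le.trans (hm 0)
  obtain ⟨M, hM⟩ := pow_unbounded_of_one_lt K ((one_lt_div (by linarith)).2 hvw)
  -- `m` would inject `{0, …, M}` into `{0, …, M - 1}`
  have hlt : ∀ n ≤ M, m n < M := fun n hn => by
    refine (pow_lt_pow_iff_right₀ (hv.trans_lt hvw)).1 ?_
    calc w ^ m n ≤ K * v ^ n := hm n
      _ ≤ K * v ^ M := by gcongr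
      _ < w ^ M := by rwa [div_pow, lt_div_iff₀ (by positivity)] at hM
  have := Finset.card_le_card_of_injOn m (s := Finset.range (M + 1)) (t := Finset.range M)
    (fun n hn => by simpa using hlt n (by simpa [Nat.lt_succ_iff] using hn)) hinj.injOn
  simp at this

section Sierpinski

variable {ι : Type*} {S : Set ι} {c d : ι → ℝ} {a b x : ℝ}

theorem notMem_biUnion_Ioo (hdisj : S.PairwiseDisjoint fun i => Icc (c i) (d i)) {i : ι}
    (hi : i ∈ S) (hx : x ∈ Icc (c i) (d i)) (hx' : x ∉ Ioo (c i) (d i)) :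
    x ∉ ⋃ j ∈ S, Ioo (c j) (d j) := by
  simp only [mem_iUnion₂, not_exists]
  intro j hj hxj
  obtain rfl := hdisj.elim_set hj hi x (Ioo_subset_Icc_self hxj) hx
  exact hx' hxj

theorem exists_right_eq_of_Ioo_subset (hdisj : S.PairwiseDisjoint fun i => Icc (c i) (d i))
    (hx : x ∉ ⋃ j ∈ S, Ioo (c j) (d j)) {p : ℝ} (hpx : p < x)
    (hgap : Ioo p x ⊆ ⋃ j ∈ S, Ioo (c j) (d j)) : ∃ j ∈ S, c j < x ∧ d j = x := by
  obtain ⟨j, hj, hsub⟩ := isPreconnected_Ioo.exists_subset_of_pairwiseDisjoint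
    (nonempty_Ioo.2 hpx) (fun _ _ => isOpen_Ioo) (hdisj.mono fun _ => Ioo_subset_Icc_self) hgap
  rw [Ioo_subset_Ioo_iff hpx] at hsub
  have hcx : c j < x := hsub.1.trans_lt hpx
  refine ⟨j, hj, hcx, le_antisymm (not_lt.1 fun hxd => ?_) hsub.2⟩
  exact hx (mem_iUnion₂.2 ⟨j, hj, hcx, hxd⟩)

theorem exists_left_eq_of_Ioo_subset (hdisj : S.PairwiseDisjoint fun i => Icc (c i) (d i))
    (hx : x ∉ ⋃ j ∈ S, Ioo (c j) (d j)) {q : ℝ} (hxq : x < q)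
    (hgap : Ioo x q ⊆ ⋃ j ∈ S, Ioo (c j) (d j)) : ∃ j ∈ S, c j = x ∧ x < d j := by
  obtain ⟨j, hj, hsub⟩ := isPreconnected_Ioo.exists_subset_of_pairwiseDisjoint
    (nonempty_Ioo.2 hxq) (fun _ _ => isOpen_Ioo) (hdisj.mono fun _ => Ioo_subset_Icc_self) hgap
  rw [Ioo_subset_Ioo_iff hxq] at hsub
  have hxd : x < d j := hxq.trans_le hsub.2
  refine ⟨j, hj, le_antisymm hsub.1 (not_lt.1 fun hcx => ?_), hxd⟩
  exact hx (mem_iUnion₂.2 ⟨j, hj, hcx, hxd⟩)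

theorem countable_Icc_diff_biUnion_Ioo [Countable ι]
    (hU : Icc a b ⊆ ⋃ i ∈ S, Icc (c i) (d i)) :
    (Icc a b \ ⋃ i ∈ S, Ioo (c i) (d i)).Countable := by
  refine (S.to_countable.biUnion fun i _ => (countable_singleton (d i)).insert (c i)).mono ?_
  rintro x ⟨hx, hx'⟩
  obtain ⟨i, hi, hxc, hxd⟩ := mem_iUnion₂.1 (hU hx)
  refine mem_iUnion₂.2 ⟨i, hi, ?_⟩
  by_contra h
  simp only [mem_insert_iff, mem_singleton_iff, not_or] at h
  exact hx' (mem_iUnion₂.2 ⟨i, hi, lt_of_le_of_ne hxc (Ne.symm h.1), lt_of_le_of_ne hxd h.2⟩)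

/-- The endpoints lying between the interval containing `a` and any other interval of the family
would form a countable closed set without isolated points. -/
theorem eq_of_left_mem_of_biUnion_Icc_eq_Icc [Countable ι] (hcd : ∀ i ∈ S, c i ≤ d i)
    (hdisj : S.PairwiseDisjoint fun i => Icc (c i) (d i))
    (hU : ⋃ i ∈ S, Icc (c i) (d i) = Icc a b) {p q : ι} (hp : p ∈ S) (hq : q ∈ S)
    (hap : a ∈ Icc (c p) (d p)) : p = q := by
  by_contra hpq
  have hsub : ∀ i ∈ S, Icc (c i) (d i) ⊆ Icc a b := fun i hi =>
    hU ▸ subset_biUnion_of_mem (u := fun j => Icc (c j) (d j)) hi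
  have hdp : d p ∈ Icc a b := hsub p hp ⟨hcd p hp, le_rfl⟩
  have hcq : c q ∈ Icc a b := hsub q hq ⟨le_rfl, hcd q hq⟩
  have hdc : d p < c q := not_le.1 fun h =>
    hpq (hdisj.elim_set hp hq (c q) ⟨hap.1.trans hcq.1, h⟩ ⟨le_rfl, hcd q hq⟩)
  set E := (Icc a b \ ⋃ j ∈ S, Ioo (c j) (d j)) ∩ Icc (d p) (c q)
  have hE : IsClosed E := (isClosed_Icc.sdiff (isOpen_biUnion fun _ _ => isOpen_Ioo)).inter
    isClosed_Icc
  have hEct : E.Countable := (countable_Icc_diff_biUnion_Ioo hU.ge).mono inter_subset_left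
  have hdpE : d p ∈ E := ⟨⟨hdp, notMem_biUnion_Ioo hdisj hp ⟨hcd p hp, le_rfl⟩
    fun h => h.2.false⟩, le_rfl, hdc.le⟩
  obtain ⟨x, ⟨⟨-, hx⟩, hpx, hxq⟩, ε, hε, hiso⟩ := hE.exists_isolated_of_countable hEct ⟨_, hdpE⟩
  have hgap : ∀ y ∈ Ioo (max (x - ε) (d p)) (min (x + ε) (c q)), y ≠ x →
      y ∈ ⋃ j ∈ S, Ioo (c j) (d j) := fun y ⟨hy₁, hy₂⟩ hne => by
    rw [max_lt_iff] at hy₁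
    rw [lt_min_iff] at hy₂
    by_contra h
    refine hne (hiso y ⟨⟨⟨hdp.1.trans hy₁.2.le, hy₂.2.le.trans hcq.2⟩, h⟩, hy₁.2.le, hy₂.2.le⟩ ?_)
    rw [Real.dist_eq, abs_sub_lt_iff]
    constructor <;> linarith
  obtain ⟨j, hj, hdj, hcj⟩ : ∃ j ∈ S, d j = x ∧ (d p < x → c j < x) := by
    rcases hpx.eq_or_lt with h | hlt
    · exact ⟨p, hp, h, fun h' => absurd h h'.ne⟩
    refine (exists_right_eq_of_Ioo_subset hdisj hx (max_lt (sub_lt_self x hε) hlt) fun y hy =>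
      hgap y ⟨hy.1, hy.2.trans_le (le_min (le_add_of_nonneg_right hε.le) hxq)⟩ hy.2.ne).imp
        fun j ⟨hj, hcj, hdj⟩ => ⟨hj, hdj, fun _ => hcj⟩
  obtain ⟨k, hk, hck, hdk⟩ : ∃ k ∈ S, c k = x ∧ (x < c q → x < d k) := by
    rcases hxq.eq_or_lt with h | hlt
    · exact ⟨q, hq, h.symm, fun h' => absurd h h'.ne⟩
    refine (exists_left_eq_of_Ioo_subset hdisj hx (lt_min (lt_add_of_pos_right x hε) hlt) fun y hy =>
      hgap y ⟨(max_le (sub_le_self x hε.le) hpx).trans_lt hy.1, hy.2⟩ hy.1.ne').imp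
        fun k ⟨hk, hck, hdk⟩ => ⟨hk, hck, fun _ => hdk⟩
  obtain rfl : j = k := hdisj.elim_set hj hk x ⟨hdj ▸ hcd j hj, hdj.ge⟩ ⟨hck.le, hck ▸ hcd k hk⟩
  rcases lt_or_ge (d p) x with h | h
  · exact (hcj h).ne hck
  · exact (hdk (h.trans_lt hdc)).ne' hdj

theorem eq_Icc_of_biUnion_Icc_eq_Icc [Countable ι] (hcd : ∀ i ∈ S, c i ≤ d i)
    (hdisj : S.PairwiseDisjoint fun i => Icc (c i) (d i))
    (hU : ⋃ i ∈ S, Icc (c i) (d i) = Icc a b) {i : ι} (hi : i ∈ S) : Icc (c i) (d i) = Icc a b := by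
  have hsub : Icc (c i) (d i) ⊆ Icc a b :=
    hU ▸ subset_biUnion_of_mem (u := fun j => Icc (c j) (d j)) hi
  have hab : a ≤ b := (hsub ⟨le_rfl, hcd i hi⟩).1.trans (hsub ⟨le_rfl, hcd i hi⟩).2
  obtain ⟨p, hp, hap⟩ := mem_iUnion₂.1 (hU.ge (left_mem_Icc.2 hab))
  refine hsub.antisymm (hU ▸ iUnion₂_subset fun j hj => ?_)
  rw [← eq_of_left_mem_of_biUnion_Icc_eq_Icc hcd hdisj hU hp hj hap,
    eq_of_left_mem_of_biUnion_Icc_eq_Icc hcd hdisj hU hp hi hap]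

/-- Sierpiński's theorem for a compact interval of `ℝ`. -/
theorem eq_Icc_of_biUnion_eq_Icc [Countable ι] {T : ι → Set ℝ}
    (hT : ∀ i ∈ S, IsConnected (T i) ∧ IsCompact (T i)) (hdisj : S.PairwiseDisjoint T)
    (hU : ⋃ i ∈ S, T i = Icc a b) {i : ι} (hi : i ∈ S) : T i = Icc a b := by
  have hT_eq : ∀ i ∈ S, T i = Icc (sInf (T i)) (sSup (T i)) := fun i hi =>
    eq_Icc_of_connected_compact (hT i hi).1 (hT i hi).2
  have hcd : ∀ i ∈ S, sInf (T i) ≤ sSup (T i) := fun i hi =>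
    csInf_le_csSup (hT i hi).1.nonempty (hT i hi).2.bddBelow (hT i hi).2.bddAbove
  rw [hT_eq i hi]
  refine eq_Icc_of_biUnion_Icc_eq_Icc hcd (fun j hj k hk hjk => ?_) ?_ hi
  · show Disjoint (Icc _ _) (Icc _ _)
    rw [← hT_eq j hj, ← hT_eq k hk]
    exact hdisj hj hk hjk
  · rw [← hU]
    exact iUnion₂_congr fun j hj => (hT_eq j hj).symm

end Sierpinski

theorem two_rpow_add_lt_two_rpow_mul {x u : ℝ} (hx : 1 ≤ x) (hu : 2 ≤ u) :
    (2 : ℝ) ^ x + x < 2 ^ (u * x) := by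
  have hbern : 1 + x ≤ (2 : ℝ) ^ x := by
    simpa [one_add_one_eq_two] using one_add_mul_self_le_rpow_one_add (s := 1) (by norm_num) hx
  calc (2 : ℝ) ^ x + x < 2 ^ x * 2 := by linarith
    _ ≤ 2 ^ x * 2 ^ x := by gcongr; simpa using Real.rpow_le_rpow_of_exponent_le one_le_two hx
    _ = 2 ^ (2 * x) := by rw [← Real.rpow_add two_pos, two_mul]
    _ ≤ 2 ^ (u * x) := by gcongr; linarith

namespace Xu

variable {u v w δ x y : ℝ} {n k : ℕ} {F : ℝ → ℝ}

/-- The `(n + 1)`-st interval in the definition of `X_u`: blocks are indexed from `0`. -/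
noncomputable def block (u : ℝ) (n : ℕ) : Set ℝ :=
  Icc ((2 : ℝ) ^ u ^ (n + 1)) ((2 : ℝ) ^ u ^ (n + 1) + u ^ (n + 1))

theorem mem_iff : x ∈ Xu u ↔ ∃ n, x ∈ block u n := by
  simp only [Xu, block, mem_iUnion, mem_Ici, exists_prop]
  exact ⟨fun ⟨n, hn, hx⟩ => ⟨n - 1, by rwa [Nat.sub_add_cancel hn]⟩,
    fun ⟨n, hx⟩ => ⟨n + 1, Nat.le_add_left 1 n, hx⟩⟩

theorem block_subset : block u n ⊆ Xu u := fun _ hx => mem_iff.2 ⟨n, hx⟩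

theorem exists_notMem_Icc (hu : 2 ≤ u) (hnk : n < k) (hx : x ∈ block u n) (hy : y ∈ block u k) :
    ∃ z ∈ Icc x y, z ∉ Xu u := by
  have hu1 : 1 ≤ u := by linarith
  have hgap : (2 : ℝ) ^ u ^ (n + 1) + u ^ (n + 1) < 2 ^ u ^ (n + 1 + 1) := by
    rw [pow_succ' u (n + 1)]
    exact two_rpow_add_lt_two_rpow_mul (one_le_pow₀ hu1) hu
  have hmono : ∀ {i j : ℕ}, i ≤ j → (2 : ℝ) ^ u ^ (i + 1) ≤ 2 ^ u ^ (j + 1) := fun h =>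
    Real.rpow_le_rpow_of_exponent_le one_le_two (pow_le_pow_right₀ hu1 (by omega))
  obtain ⟨z, hz₁, hz₂⟩ := exists_between hgap
  refine ⟨z, ⟨by linarith [hx.2], by linarith [hy.1, hmono (Nat.succ_le_of_lt hnk)]⟩, fun hz => ?_⟩
  obtain ⟨j, hj⟩ := mem_iff.1 hz
  rcases le_or_gt j n with hjn | hnj
  · linarith [hj.2, hmono hjn, pow_le_pow_right₀ hu1 (by omega : j + 1 ≤ n + 1)]
  · linarith [hj.1, hmono (Nat.succ_le_of_lt hnj)]

theorem eq_of_mem_block (hu : 2 ≤ u) (hn : x ∈ block u n) (hk : x ∈ block u k) : n = k := by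
  by_contra hne
  rcases lt_or_gt_of_ne hne with h | h
  · obtain ⟨z, hz, hzX⟩ := exists_notMem_Icc hu h hn hk
    exact hzX (le_antisymm hz.2 hz.1 ▸ block_subset hn)
  · obtain ⟨z, hz, hzX⟩ := exists_notMem_Icc hu h hk hn
    exact hzX (le_antisymm hz.2 hz.1 ▸ block_subset hn)

theorem exists_subset_block {P : Set ℝ} (hu : 2 ≤ u) (hP : IsPreconnected P) (hPX : P ⊆ Xu u) :
    ∃ n, P ⊆ block u n := by
  rcases P.eq_empty_or_nonempty with rfl | ⟨x, hx⟩
  · exact ⟨0, empty_subset _⟩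
  obtain ⟨n, hn⟩ := mem_iff.1 (hPX hx)
  refine ⟨n, fun y hy => ?_⟩
  obtain ⟨k, hk⟩ := mem_iff.1 (hPX hy)
  rcases lt_trichotomy n k with h | rfl | h
  · obtain ⟨z, hz, hzX⟩ := exists_notMem_Icc hu h hn hk
    exact absurd (hPX (hP.Icc_subset hx hy hz)) hzX
  · exact hk
  · obtain ⟨z, hz, hzX⟩ := exists_notMem_Icc hu h hk hn
    exact absurd (hPX (hP.Icc_subset hy hx hz)) hzX

theorem left_mem_block (hu : 0 ≤ u) : (2 : ℝ) ^ u ^ (n + 1) ∈ block u n :=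
  left_mem_Icc.2 (le_add_of_nonneg_right (by positivity))

theorem right_mem_block (hu : 0 ≤ u) :
    (2 : ℝ) ^ u ^ (n + 1) + u ^ (n + 1) ∈ block u n :=
  right_mem_Icc.2 (le_add_of_nonneg_right (by positivity))

theorem isConnected_block (hu : 0 ≤ u) : IsConnected (block u n) :=
  isConnected_Icc (le_add_of_nonneg_right (by positivity))

theorem image_block_disjoint (hv : 2 ≤ v) (hF : InjOn F (Xu v)) (hnk : n ≠ k) :
    Disjoint (F '' block v n) (F '' block v k) := by
  have : Disjoint (block v n) (block v k) :=
    disjoint_left.2 fun x hn hk => hnk (eq_of_mem_block hv hn hk)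
  rw [disjoint_iff_inter_eq_empty, ← hF.image_inter block_subset block_subset,
    disjoint_iff_inter_eq_empty.1 this, image_empty]

theorem exists_image_block_subset (hw : 2 ≤ w) (hFc : ContinuousOn F (Xu v))
    (hF : MapsTo F (Xu v) (Xu w)) (n : ℕ) : ∃ m, F '' block v n ⊆ block w m :=
  exists_subset_block hw (isPreconnected_Icc.image F (hFc.mono block_subset))
    (image_subset_iff.2 (hF.mono_left block_subset))

theorem image_block_eq (hv : 2 ≤ v) (hw : 2 ≤ w) (hF : BijOn F (Xu v) (Xu w))
    (hFc : ContinuousOn F (Xu v)) {m : ℕ → ℕ} (hm : ∀ n, F '' block v n ⊆ block w (m n)) (n : ℕ) :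
    F '' block v n = block w (m n) := by
  refine eq_Icc_of_biUnion_eq_Icc (S := {k | m k = m n}) (T := fun k => F '' block v k)
    (fun k _ => ⟨(isConnected_block (by linarith)).image _ (hFc.mono block_subset),
      isCompact_Icc.image_of_continuousOn (hFc.mono block_subset)⟩)
    (fun k _ k' _ h => image_block_disjoint hv hF.injOn h) ?_ rfl
  refine (iUnion₂_subset fun k hk => hk ▸ hm k).antisymm fun y hy => ?_
  obtain ⟨x, hx, rfl⟩ := hF.surjOn (block_subset hy)
  obtain ⟨k, hk⟩ := mem_iff.1 hx
  exact mem_iUnion₂.2 ⟨k, eq_of_mem_block hw (hm k ⟨x, hk, rfl⟩) hy, x, hk, rfl⟩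

theorem injective_of_image_block_eq (hv : 2 ≤ v) (hw : 0 ≤ w) (hF : InjOn F (Xu v))
    {m : ℕ → ℕ} (him : ∀ n, F '' block v n = block w (m n)) : Injective m := by
  intro a b hab
  by_contra hne
  have := image_block_disjoint hv hF hne
  rw [him a, him b, hab, disjoint_self, bot_eq_empty] at this
  exact (isConnected_block hw).nonempty.ne_empty this

theorem pow_le_of_image_block_eq (hv : 1 ≤ v) (hw : 0 ≤ w) (hδ : 0 < δ)
    (hFδ : ∀ x ∈ Xu v, ∀ y ∈ Xu v, dist x y < δ → dist (F x) (F y) < 1) {m : ℕ}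
    (him : F '' block v n = block w m) : w ^ (m + 1) ≤ (δ⁻¹ + 1) * v ^ (n + 1) := by
  obtain ⟨x, hx, hFx⟩ := him ▸ left_mem_block hw
  obtain ⟨y, hy, hFy⟩ := him ▸ right_mem_block hw
  have hv1 : 1 ≤ v ^ (n + 1) := one_le_pow₀ hv
  calc w ^ (m + 1) = dist (F x) (F y) := by
        rw [hFx, hFy, dist_comm, Real.dist_eq, add_sub_cancel_left, abs_of_nonneg (by positivity)]
    _ ≤ 1 * (dist x y / δ + 1) := (convex_Icc _ _).dist_map_le_of_forall_dist_lt hδ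
        (fun a ha b hb h => (hFδ a (block_subset ha) b (block_subset hb) h).le) hx hy
    _ ≤ 1 * (v ^ (n + 1) / δ + 1) := by
        gcongr
        simpa using Real.dist_le_of_mem_Icc hx hy
    _ ≤ (δ⁻¹ + 1) * v ^ (n + 1) := by
        rw [div_eq_inv_mul]
        linarith

end Xu

/-- If `2 ≤ v < w` then there is no uniformly continuous
bijection from `X_v` onto `X_w`. -/
theorem stmt_1 (v w : ℝ) (hv : 2 ≤ v) (hvw : v < w) :
    ¬ ∃ f : ↥(Xu v) → ↥(Xu w), Function.Bijective f ∧ UniformContinuous f := by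
  rintro ⟨f, hbij, huc⟩
  obtain ⟨F, hF, hFuc⟩ := exists_bijOn_uniformContinuousOn hbij huc
  have hw : 2 ≤ w := hv.trans hvw.le
  choose m hm using Xu.exists_image_block_subset hw hFuc.continuousOn hF.mapsTo
  have him := Xu.image_block_eq hv hw hF hFuc.continuousOn hm
  obtain ⟨δ, hδ, hFδ⟩ := Metric.uniformContinuousOn_iff.1 hFuc 1 one_pos
  refine not_injective_of_pow_le (K := (δ⁻¹ + 1) * v) (m := fun n => m n + 1) (by linarith) hvw
    (fun n => ?_) (Nat.succ_injective.comp
      (Xu.injective_of_image_block_eq hv (by linarith) hF.injOn him))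
  calc w ^ (m n + 1) ≤ (δ⁻¹ + 1) * v ^ (n + 1) :=
        Xu.pow_le_of_image_block_eq (by linarith) (by linarith) hδ hFδ (him n)
    _ = (δ⁻¹ + 1) * v * v ^ n := by ring
end

section
/- There exists a family 𝓖 of open subsets of ℝ with the cardinality of the continuum such that for any two distinct U, V ∈ 𝓖 there exists a bijection f : U → V with both f and f⁻¹ uniformly continuous, but there exists no strictly increasing bijection from U onto V. -/
/-!
The set `codedSet S` coding `S : ℕ → Bool` is a disjoint union of strips `(4n, 4n + 3)`. The
middle unit interval of the `n`-th strip is punctured at a sequence of points accumulating at its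
right end if `S n`, and at its left end otherwise. Reflecting the strips on which `S` and `T`
differ is an isometry on each strip, and distinct strips are at distance at least `1`, so it is a
bijection `codedSet S ≃ codedSet T` that is uniformly continuous in both directions.

An order isomorphism, on the other hand, maps the cuts of `codedSet S` without endpoints (gaps) to
gaps, and preserves being a limit of gaps from the left or from the right. In `codedSet S` these
limit gaps form an increasing sequence whose `n`-th term is a limit from the left exactly when
`S n`. Since a strictly increasing surjection of `ℕ` is the identity, an order isomorphism
`codedSet S ≃o codedSet T` matches these sequences term by term, hence `S = T`.
-/

open Set

section Gaps

variable {α β : Type*} [Preorder α] [Preorder β]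

structure IsGap (D : Set α) : Prop where
  isLowerSet : IsLowerSet D
  nonempty : D.Nonempty
  compl_nonempty : Dᶜ.Nonempty
  exists_gt : ∀ x ∈ D, ∃ y ∈ D, x < y
  exists_lt : ∀ x ∈ Dᶜ, ∃ y ∈ Dᶜ, y < x

def IsLeftLimitGap (D : Set α) : Prop :=
  IsGap D ∧ ∀ x ∈ D, ∃ D', IsGap D' ∧ x ∈ D' ∧ D' ⊂ D

def IsRightLimitGap (D : Set α) : Prop :=
  IsGap D ∧ ∀ x ∈ Dᶜ, ∃ D', IsGap D' ∧ x ∉ D' ∧ D ⊂ D'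

variable {D : Set α}

theorem IsGap.image (hD : IsGap D) (e : α ≃o β) : IsGap (e '' D) where
  isLowerSet := hD.isLowerSet.image e
  nonempty := hD.nonempty.image e
  compl_nonempty := by
    rw [← image_compl_eq e.bijective]
    exact hD.compl_nonempty.image e
  exists_gt := by
    rintro _ ⟨x, hx, rfl⟩
    obtain ⟨y, hy, hxy⟩ := hD.exists_gt x hx
    exact ⟨e y, mem_image_of_mem e hy, e.lt_iff_lt.2 hxy⟩
  exists_lt := by
    rw [← image_compl_eq e.bijective]
    rintro _ ⟨x, hx, rfl⟩
    obtain ⟨y, hy, hyx⟩ := hD.exists_lt x hx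
    exact ⟨e y, mem_image_of_mem e hy, e.lt_iff_lt.2 hyx⟩

theorem IsLeftLimitGap.image (hD : IsLeftLimitGap D) (e : α ≃o β) :
    IsLeftLimitGap (e '' D) := by
  refine ⟨hD.1.image e, ?_⟩
  rintro _ ⟨x, hx, rfl⟩
  obtain ⟨D', hD', hxD', hD'D⟩ := hD.2 x hx
  exact ⟨e '' D', hD'.image e, mem_image_of_mem e hxD', e.injective.image_strictMono hD'D⟩

theorem IsRightLimitGap.image (hD : IsRightLimitGap D) (e : α ≃o β) :
    IsRightLimitGap (e '' D) := by
  refine ⟨hD.1.image e, ?_⟩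
  rw [← image_compl_eq e.bijective]
  rintro _ ⟨x, hx, rfl⟩
  obtain ⟨D', hD', hxD', hDD'⟩ := hD.2 x hx
  refine ⟨e '' D', hD'.image e, ?_, e.injective.image_strictMono hDD'⟩
  rwa [e.injective.mem_set_image]

end Gaps

section RealCuts

variable {U : Set ℝ} {a : ℝ}

def cut (U : Set ℝ) (a : ℝ) : Set U := {x | (x : ℝ) < a}

theorem cut_mono {b : ℝ} (hab : a ≤ b) : cut U a ⊆ cut U b :=
  fun _ hx => lt_of_lt_of_le hx hab

theorem isGap_cut (hU : IsOpen U) (ha : a ∉ U) (h₁ : ∃ x ∈ U, x < a) (h₂ : ∃ x ∈ U, a < x) :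
    IsGap (cut U a) where
  isLowerSet _ _ hxy hy := lt_of_le_of_lt (α := ℝ) hxy hy
  nonempty := let ⟨x, hx, hxa⟩ := h₁; ⟨⟨x, hx⟩, hxa⟩
  compl_nonempty := let ⟨x, hx, hax⟩ := h₂; ⟨⟨x, hx⟩, not_lt.2 hax.le⟩
  exists_gt x hx := by
    obtain ⟨y, hxy, hyU, hya⟩ := ((hU.eventually_mem x.2).and (eventually_lt_nhds hx)).exists_gt
    exact ⟨⟨y, hyU⟩, hya, hxy⟩
  exists_lt x hx := by
    have hax : a < x := lt_of_le_of_ne (not_lt.1 hx) fun h => ha (h ▸ x.2)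
    obtain ⟨y, hyx, hyU, hay⟩ := ((hU.eventually_mem x.2).and (eventually_gt_nhds hax)).exists_lt
    exact ⟨⟨y, hyU⟩, not_lt.2 hay.le, hyx⟩

theorem IsGap.exists_eq_cut {D : Set U} (hD : IsGap D) : ∃ a ∉ U, D = cut U a := by
  obtain ⟨z, hz⟩ := hD.compl_nonempty
  have hbdd : BddAbove (Subtype.val '' D) := by
    refine ⟨z, ?_⟩
    rintro _ ⟨x, hx, rfl⟩
    exact (not_le.1 fun h => hz (hD.isLowerSet h hx)).le
  have hD_iff : ∀ x : U, x ∈ D ↔ (x : ℝ) < sSup (Subtype.val '' D) := by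
    refine fun x => ⟨fun hx => ?_, fun hx => ?_⟩
    · obtain ⟨y, hy, hxy⟩ := hD.exists_gt x hx
      exact lt_of_lt_of_le hxy (le_csSup hbdd (mem_image_of_mem _ hy))
    · obtain ⟨_, ⟨y, hy, rfl⟩, hxy⟩ := exists_lt_of_lt_csSup (hD.nonempty.image _) hx
      exact hD.isLowerSet hxy.le hy
  refine ⟨sSup (Subtype.val '' D), fun ha => ?_, ext hD_iff⟩
  by_cases hD_mem : (⟨_, ha⟩ : U) ∈ D
  · exact lt_irrefl _ ((hD_iff _).1 hD_mem)
  · obtain ⟨y, hy, hya⟩ := hD.exists_lt _ hD_mem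
    exact hy ((hD_iff y).2 hya)

def IsLeftLimit (U : Set ℝ) (a : ℝ) : Prop :=
  ∀ x ∈ U, x < a → ∃ b ∉ U, ∃ y ∈ U, x < b ∧ b < y ∧ y < a

def IsRightLimit (U : Set ℝ) (a : ℝ) : Prop :=
  ∀ x ∈ U, a < x → ∃ b ∉ U, ∃ y ∈ U, a < y ∧ y < b ∧ b < x

theorem isLeftLimitGap_cut (hU : IsOpen U) (ha : a ∉ U) (h₁ : ∃ x ∈ U, x < a)
    (h₂ : ∃ x ∈ U, a < x) (hL : IsLeftLimit U a) : IsLeftLimitGap (cut U a) := by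
  refine ⟨isGap_cut hU ha h₁ h₂, fun x hx => ?_⟩
  obtain ⟨b, hb, y, hy, hxb, hby, hya⟩ := hL x x.2 hx
  refine ⟨cut U b, isGap_cut hU hb ⟨x, x.2, hxb⟩ ⟨y, hy, hby⟩, hxb, ?_⟩
  exact (ssubset_iff_of_subset (cut_mono (hby.trans hya).le)).2
    ⟨⟨y, hy⟩, hya, not_lt.2 hby.le⟩

theorem isRightLimitGap_cut (hU : IsOpen U) (ha : a ∉ U) (h₁ : ∃ x ∈ U, x < a)
    (h₂ : ∃ x ∈ U, a < x) (hR : IsRightLimit U a) : IsRightLimitGap (cut U a) := by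
  refine ⟨isGap_cut hU ha h₁ h₂, fun x hx => ?_⟩
  have hax : a < x := lt_of_le_of_ne (not_lt.1 hx) fun h => ha (h ▸ x.2)
  obtain ⟨b, hb, y, hy, hay, hyb, hbx⟩ := hR x x.2 hax
  refine ⟨cut U b, isGap_cut hU hb ⟨y, hy, hyb⟩ ⟨x, x.2, hbx⟩, not_lt.2 hbx.le, ?_⟩
  exact (ssubset_iff_of_subset (cut_mono (hay.trans hyb).le)).2
    ⟨⟨y, hy⟩, hyb, not_lt.2 hay.le⟩

theorem IsLeftLimitGap.exists_eq_cut {D : Set U} (hD : IsLeftLimitGap D) :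
    ∃ a ∉ U, D = cut U a ∧ IsLeftLimit U a := by
  obtain ⟨a, ha, rfl⟩ := hD.1.exists_eq_cut
  refine ⟨a, ha, rfl, fun x hx hxa => ?_⟩
  obtain ⟨D', hD', hxb, hD'D⟩ := hD.2 ⟨x, hx⟩ hxa
  obtain ⟨b, hb, rfl⟩ := hD'.exists_eq_cut
  obtain ⟨y, hya, hyb⟩ := exists_of_ssubset hD'D
  exact ⟨b, hb, y, y.2, hxb, lt_of_le_of_ne (not_lt.1 hyb) fun h => hb (h ▸ y.2), hya⟩

theorem IsRightLimitGap.exists_eq_cut {D : Set U} (hD : IsRightLimitGap D) :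
    ∃ a ∉ U, D = cut U a ∧ IsRightLimit U a := by
  obtain ⟨a, ha, rfl⟩ := hD.1.exists_eq_cut
  refine ⟨a, ha, rfl, fun x hx hax => ?_⟩
  obtain ⟨D', hD', hxb, hDD'⟩ := hD.2 ⟨x, hx⟩ (not_lt.2 hax.le)
  obtain ⟨b, hb, rfl⟩ := hD'.exists_eq_cut
  obtain ⟨y, hyb, hya⟩ := exists_of_ssubset hDD'
  exact ⟨b, hb, y, y.2, lt_of_le_of_ne (not_lt.1 hya) fun h => ha (h ▸ y.2), hyb,
    lt_of_le_of_ne (not_lt.1 hxb) fun h => hb (h ▸ hx)⟩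

theorem not_isLeftLimit_of_Ioo_subset {x c : ℝ} (hxc : x < c) (hca : c ≤ a)
    (hsub : Ioo x c ⊆ U) (hgap : ∀ y ∈ U, y ∉ Ico c a) : ¬IsLeftLimit U a := by
  intro hL
  obtain ⟨b, hb, y, hy, hxb, hby, hya⟩ :=
    hL ((x + c) / 2) (hsub ⟨by linarith, by linarith⟩) (by linarith)
  have hyc : y < c := not_le.1 fun h => hgap y hy ⟨h, hya⟩
  exact hb (hsub ⟨by linarith, hby.trans hyc⟩)

theorem not_isRightLimit_of_Ioo_subset {x c : ℝ} (hcx : c < x) (hac : a ≤ c)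
    (hsub : Ioo c x ⊆ U) (hgap : ∀ y ∈ U, y ∉ Ioc a c) : ¬IsRightLimit U a := by
  intro hR
  obtain ⟨b, hb, y, hy, hay, hyb, hbx⟩ :=
    hR ((c + x) / 2) (hsub ⟨by linarith, by linarith⟩) (by linarith)
  have hcy : c < y := not_le.1 fun h => hgap y hy ⟨hay, h⟩
  exact hb (hsub ⟨hcy.trans hyb, by linarith⟩)

end RealCuts

def puncturedUnit : Set ℝ := ⋃ k : ℕ, Ioo ((2 : ℝ)⁻¹ ^ (k + 1)) (2⁻¹ ^ k)

theorem isOpen_puncturedUnit : IsOpen puncturedUnit :=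
  isOpen_iUnion fun _ => isOpen_Ioo

theorem mem_puncturedUnit {t : ℝ} (k : ℕ) (h : t ∈ Ioo ((2 : ℝ)⁻¹ ^ (k + 1)) (2⁻¹ ^ k)) :
    t ∈ puncturedUnit :=
  mem_iUnion.2 ⟨k, h⟩

theorem Ioo_half_one_subset_puncturedUnit : Ioo 2⁻¹ 1 ⊆ puncturedUnit :=
  fun _ ht => mem_puncturedUnit 0 (by simpa using ht)

theorem puncturedUnit_subset_Ioo : puncturedUnit ⊆ Ioo 0 1 := by
  intro t ht
  obtain ⟨k, hk₁, hk₂⟩ := mem_iUnion.1 ht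
  exact ⟨lt_trans (by positivity) hk₁, hk₂.trans_le (pow_le_one₀ (by norm_num) (by norm_num))⟩

theorem pow_succ_notMem_puncturedUnit (k : ℕ) : (2 : ℝ)⁻¹ ^ (k + 1) ∉ puncturedUnit := by
  intro h
  obtain ⟨j, hj₁, hj₂⟩ := mem_iUnion.1 h
  rw [pow_lt_pow_iff_right_of_lt_one₀ (by norm_num) (by norm_num)] at hj₁ hj₂
  omega

theorem exists_eq_pow_of_notMem_puncturedUnit {t : ℝ} (ht : t ∈ Ioo 0 1)
    (htK : t ∉ puncturedUnit) : ∃ k : ℕ, t = 2⁻¹ ^ (k + 1) := by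
  obtain ⟨k, hk₁, hk₂⟩ := exists_nat_pow_near_of_lt_one ht.1 ht.2.le
    (by norm_num : (0 : ℝ) < 2⁻¹) (by norm_num)
  obtain rfl : t = 2⁻¹ ^ k := hk₂.eq_of_not_lt fun h => htK (mem_puncturedUnit k ⟨hk₁, h⟩)
  obtain _ | k := k
  · exact absurd ht.2 (by simp)
  · exact ⟨k, rfl⟩

theorem exists_punctured_nhd_subset_puncturedUnit {t : ℝ} (ht : t ∈ Ioo 0 1)
    (htK : t ∉ puncturedUnit) :
    ∃ ε > 0, Ioo (t - ε) t ⊆ puncturedUnit ∧ Ioo t (t + ε) ⊆ puncturedUnit := by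
  obtain ⟨k, rfl⟩ := exists_eq_pow_of_notMem_puncturedUnit ht htK
  have h₁ : (2 : ℝ)⁻¹ ^ (k + 1) - 2⁻¹ ^ (k + 2) = 2⁻¹ ^ (k + 2) := by ring
  have h₂ : (2 : ℝ)⁻¹ ^ (k + 1) + 2⁻¹ ^ (k + 2) < 2⁻¹ ^ k := by
    have : (0 : ℝ) < 2⁻¹ ^ k := by positivity
    ring_nf; linarith
  refine ⟨2⁻¹ ^ (k + 2), by positivity, fun s hs => ?_, fun s hs => ?_⟩
  · exact mem_puncturedUnit (k + 1) ⟨h₁ ▸ hs.1, hs.2⟩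
  · exact mem_puncturedUnit k ⟨hs.1, hs.2.trans h₂⟩

theorem exists_mem_lt_notMem_puncturedUnit {δ : ℝ} (hδ : 0 < δ) :
    ∃ s ∈ puncturedUnit, ∃ t ∈ Ioo (0 : ℝ) 1, t ∉ puncturedUnit ∧ s < t ∧ t < δ := by
  obtain ⟨k, hk⟩ := exists_pow_lt_of_lt_one hδ (by norm_num : (2 : ℝ)⁻¹ < 1)
  have h₀ : (0 : ℝ) < 2⁻¹ ^ k := by positivity
  refine ⟨3 * 2⁻¹ ^ (k + 3), mem_puncturedUnit (k + 1) ⟨?_, ?_⟩, 2⁻¹ ^ (k + 1),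
    ⟨by positivity, pow_lt_one₀ (by norm_num) (by norm_num) (by omega)⟩,
    pow_succ_notMem_puncturedUnit k, ?_, ?_⟩ <;> ring_nf <;> linarith

def block : Bool → ℝ → Set ℝ
  | true, c => {x | c + 1 - x ∈ puncturedUnit}
  | false, c => {x | x - c ∈ puncturedUnit}

theorem isOpen_block (b : Bool) (c : ℝ) : IsOpen (block b c) := by
  cases b
  · exact isOpen_puncturedUnit.preimage (by fun_prop)
  · exact isOpen_puncturedUnit.preimage (by fun_prop)

theorem block_subset_Ioo (b : Bool) (c : ℝ) : block b c ⊆ Ioo c (c + 1) := by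
  intro x hx
  cases b
  · have := puncturedUnit_subset_Ioo hx; exact ⟨by linarith [this.1], by linarith [this.2]⟩
  · have := puncturedUnit_subset_Ioo hx; exact ⟨by linarith [this.2], by linarith [this.1]⟩

theorem reflect_mem_block_iff {b : Bool} {c x : ℝ} :
    2 * c + 1 - x ∈ block (!b) c ↔ x ∈ block b c := by
  cases b <;> simp only [block, Bool.not_true, Bool.not_false, mem_ofPred_eq] <;> ring_nf

theorem exists_punctured_nhd_subset_block {b : Bool} {c a : ℝ} (ha : a ∈ Ioo c (c + 1))
    (hab : a ∉ block b c) :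
    ∃ ε > 0, Ioo (a - ε) a ⊆ block b c ∧ Ioo a (a + ε) ⊆ block b c := by
  cases b
  · obtain ⟨ε, hε, hl, hr⟩ := exists_punctured_nhd_subset_puncturedUnit (t := a - c)
      ⟨by linarith [ha.1], by linarith [ha.2]⟩ hab
    exact ⟨ε, hε, fun x hx => hl ⟨by linarith [hx.1], by linarith [hx.2]⟩,
      fun x hx => hr ⟨by linarith [hx.1], by linarith [hx.2]⟩⟩
  · obtain ⟨ε, hε, hl, hr⟩ := exists_punctured_nhd_subset_puncturedUnit (t := c + 1 - a)
      ⟨by linarith [ha.2], by linarith [ha.1]⟩ hab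
    exact ⟨ε, hε, fun x hx => hr ⟨by linarith [hx.2], by linarith [hx.1]⟩,
      fun x hx => hl ⟨by linarith [hx.2], by linarith [hx.1]⟩⟩

-- The unit intervals around the block keep the left limit gap of one block apart from the right
-- limit gap of the next.
def strip (b : Bool) (c : ℝ) : Set ℝ := Ioo c (c + 1) ∪ block b (c + 1) ∪ Ioo (c + 2) (c + 3)

theorem isOpen_strip (b : Bool) (c : ℝ) : IsOpen (strip b c) :=
  (isOpen_Ioo.union (isOpen_block b _)).union isOpen_Ioo

theorem strip_subset_Ioo (b : Bool) (c : ℝ) : strip b c ⊆ Ioo c (c + 3) := by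
  rintro x ((hx | hx) | hx)
  · exact ⟨hx.1, by linarith [hx.2]⟩
  · have := block_subset_Ioo b _ hx; exact ⟨by linarith [this.1], by linarith [this.2]⟩
  · exact ⟨by linarith [hx.1], hx.2⟩

theorem reflect_mem_strip_iff {b : Bool} {c x : ℝ} :
    2 * c + 3 - x ∈ strip (!b) c ↔ x ∈ strip b c := by
  have h : 2 * c + 3 - x = 2 * (c + 1) + 1 - x := by ring
  simp only [strip, mem_union, mem_Ioo, h, reflect_mem_block_iff]
  constructor <;> rintro ((h | h) | h) <;> first
    | exact Or.inl (Or.inr h)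
    | exact Or.inl (Or.inl ⟨by linarith [h.1], by linarith [h.2]⟩)
    | exact Or.inr ⟨by linarith [h.1], by linarith [h.2]⟩

def codedSet (S : ℕ → Bool) : Set ℝ := ⋃ n : ℕ, strip (S n) (4 * n)

section CodedSet

variable {S : ℕ → Bool} {n : ℕ} {x a : ℝ}

theorem isOpen_codedSet (S : ℕ → Bool) : IsOpen (codedSet S) :=
  isOpen_iUnion fun n => isOpen_strip (S n) _

theorem strip_subset_codedSet (S : ℕ → Bool) (n : ℕ) : strip (S n) (4 * n) ⊆ codedSet S :=
  subset_iUnion (fun n => strip (S n) (4 * n)) n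

theorem exists_mem_strip_of_mem_codedSet (hx : x ∈ codedSet S) :
    ∃ n : ℕ, x ∈ strip (S n) (4 * n) ∧ x ∈ Ioo (4 * n : ℝ) (4 * n + 3) :=
  let ⟨n, hn⟩ := mem_iUnion.1 hx; ⟨n, hn, strip_subset_Ioo _ _ hn⟩

theorem pos_of_mem_codedSet (hx : x ∈ codedSet S) : 0 < x := by
  obtain ⟨n, -, hn, -⟩ := exists_mem_strip_of_mem_codedSet hx
  exact lt_of_le_of_lt (by positivity) hn

theorem mem_codedSet_iff_mem_strip (hx : x ∈ Ioo (4 * n : ℝ) (4 * n + 3)) :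
    x ∈ codedSet S ↔ x ∈ strip (S n) (4 * n) := by
  refine ⟨fun h => ?_, fun h => strip_subset_codedSet S n h⟩
  obtain ⟨m, hm, hm₁, hm₂⟩ := exists_mem_strip_of_mem_codedSet h
  have h₁ : 4 * m < 4 * n + 3 := by exact_mod_cast hm₁.trans hx.2
  have h₂ : 4 * n < 4 * m + 3 := by exact_mod_cast hx.1.trans hm₂
  obtain rfl : m = n := by omega
  exact hm

theorem notMem_codedSet_of_mem_Icc (hx : x ∈ Icc (4 * n + 3 : ℝ) (4 * n + 4)) :
    x ∉ codedSet S := by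
  intro h
  obtain ⟨m, -, hm₁, hm₂⟩ := exists_mem_strip_of_mem_codedSet h
  have h₁ : 4 * m < 4 * n + 4 := by exact_mod_cast hm₁.trans_le hx.2
  have h₂ : 4 * n + 3 < 4 * m + 3 := by exact_mod_cast hx.1.trans_lt hm₂
  omega

theorem Ioo_subset_codedSet_left (S : ℕ → Bool) (n : ℕ) :
    Ioo (4 * n : ℝ) (4 * n + 1) ⊆ codedSet S :=
  fun _ hx => strip_subset_codedSet S n (Or.inl (Or.inl hx))

theorem block_subset_codedSet (S : ℕ → Bool) (n : ℕ) :
    block (S n) (4 * n + 1) ⊆ codedSet S :=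
  fun _ hx => strip_subset_codedSet S n (Or.inl (Or.inr hx))

theorem Ioo_subset_codedSet_right (S : ℕ → Bool) (n : ℕ) :
    Ioo (4 * n + 2 : ℝ) (4 * n + 3) ⊆ codedSet S :=
  fun _ hx => strip_subset_codedSet S n (Or.inr hx)

theorem mem_codedSet_iff_mem_block (hx : x ∈ Icc (4 * n + 1 : ℝ) (4 * n + 2)) :
    x ∈ codedSet S ↔ x ∈ block (S n) (4 * n + 1) := by
  rw [mem_codedSet_iff_mem_strip ⟨by linarith [hx.1], by linarith [hx.2]⟩]
  refine ⟨?_, fun h => Or.inl (Or.inr h)⟩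
  rintro ((h | h) | h)
  · linarith [h.2, hx.1]
  · exact h
  · linarith [h.1, hx.2]

theorem mem_codedSet_iff_apply_eq_true (S : ℕ → Bool) (n : ℕ) :
    (4 * n + 5 / 4 : ℝ) ∈ codedSet S ↔ S n = true := by
  rw [mem_codedSet_iff_mem_block (n := n) ⟨by linarith, by linarith⟩]
  cases S n
  · simp only [block, mem_ofPred_eq, Bool.false_eq_true, iff_false]
    rw [show (4 : ℝ) * n + 5 / 4 - (4 * n + 1) = 2⁻¹ ^ (1 + 1) by norm_num]
    exact pow_succ_notMem_puncturedUnit 1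
  · simp only [block, mem_ofPred_eq, iff_true]
    exact Ioo_half_one_subset_puncturedUnit ⟨by linarith, by linarith⟩

theorem exists_of_notMem_codedSet (ha : a ∉ codedSet S) (ha₀ : 0 < a) :
    ∃ n : ℕ, a = 4 * n + 1 ∨ a = 4 * n + 2 ∨
      (a ∈ Ioo (4 * n + 1 : ℝ) (4 * n + 2) ∧ a ∉ block (S n) (4 * n + 1)) ∨
      a ∈ Icc (4 * n + 3 : ℝ) (4 * n + 4) := by
  obtain ⟨n, hn₁, hn₂⟩ : ∃ n : ℕ, (4 * n : ℝ) ≤ a ∧ a < 4 * n + 4 :=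
    ⟨⌊a / 4⌋₊, by linarith [Nat.floor_le (by positivity : 0 ≤ a / 4)],
      by linarith [Nat.lt_floor_add_one (a / 4)]⟩
  rcases hn₁.eq_or_lt with h | h
  · obtain _ | m := n
    · simp only [CharP.cast_eq_zero, mul_zero] at h; linarith
    · push_cast at h
      exact ⟨m, Or.inr (Or.inr (Or.inr ⟨by linarith, by linarith⟩))⟩
  refine ⟨n, ?_⟩
  by_cases h₃ : 4 * n + 3 ≤ a
  · exact Or.inr (Or.inr (Or.inr ⟨h₃, hn₂.le⟩))
  rw [mem_codedSet_iff_mem_strip ⟨h, not_le.1 h₃⟩] at ha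
  simp only [strip, mem_union, mem_Ioo, not_or, not_and_or, not_lt] at ha
  obtain ⟨⟨h₁, hb⟩, h₂⟩ := ha
  replace h₁ := h₁.resolve_left (not_le.2 h)
  replace h₂ := h₂.resolve_right h₃
  rcases h₁.eq_or_lt with rfl | h₁
  · exact Or.inl rfl
  rcases h₂.eq_or_lt with rfl | h₂
  · exact Or.inr (Or.inl rfl)
  exact Or.inr (Or.inr (Or.inl ⟨⟨h₁, h₂⟩, hb⟩))

end CodedSet

-- The holes of the `n`-th block accumulate at `specialPoint S n`.
def specialPoint (S : ℕ → Bool) (n : ℕ) : ℝ := if S n then 4 * n + 2 else 4 * n + 1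

def specialCut (S : ℕ → Bool) (n : ℕ) : Set (codedSet S) := cut (codedSet S) (specialPoint S n)

section SpecialCuts

variable {S T : ℕ → Bool} {n : ℕ} {a : ℝ}

theorem specialPoint_mem_Icc (S : ℕ → Bool) (n : ℕ) :
    specialPoint S n ∈ Icc (4 * n + 1 : ℝ) (4 * n + 2) := by
  unfold specialPoint; split_ifs <;> constructor <;> linarith

theorem specialPoint_notMem_codedSet (S : ℕ → Bool) (n : ℕ) :
    specialPoint S n ∉ codedSet S := by
  rw [mem_codedSet_iff_mem_block (specialPoint_mem_Icc S n)]
  intro h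
  have := block_subset_Ioo _ _ h
  unfold specialPoint at this; split_ifs at this <;> linarith [this.1, this.2]

theorem exists_mem_codedSet_around_specialPoint (S : ℕ → Bool) (n : ℕ) :
    (∃ x ∈ codedSet S, x < specialPoint S n) ∧ ∃ x ∈ codedSet S, specialPoint S n < x := by
  have := specialPoint_mem_Icc S n
  exact ⟨⟨4 * n + 2⁻¹, Ioo_subset_codedSet_left S n ⟨by linarith, by linarith⟩,
      by linarith [this.1]⟩,
    ⟨4 * n + 5 / 2, Ioo_subset_codedSet_right S n ⟨by linarith, by linarith⟩,
      by linarith [this.2]⟩⟩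

theorem isLeftLimit_codedSet (h : S n = true) : IsLeftLimit (codedSet S) (4 * n + 2) := by
  intro x _ hxa
  obtain ⟨s, hs, t, ht, htK, hst, htx⟩ := exists_mem_lt_notMem_puncturedUnit (sub_pos.2 hxa)
  have hs₀ := (puncturedUnit_subset_Ioo hs).1
  refine ⟨4 * n + 2 - t, ?_, 4 * n + 2 - s, block_subset_codedSet S n ?_,
    by linarith, by linarith, by linarith⟩
  · rw [mem_codedSet_iff_mem_block ⟨by linarith [ht.2], by linarith [ht.1]⟩, h]
    change 4 * n + 1 + 1 - (4 * n + 2 - t) ∉ puncturedUnit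
    rwa [show (4 : ℝ) * n + 1 + 1 - (4 * n + 2 - t) = t by ring]
  · rw [h]
    change 4 * n + 1 + 1 - (4 * n + 2 - s) ∈ puncturedUnit
    rwa [show (4 : ℝ) * n + 1 + 1 - (4 * n + 2 - s) = s by ring]

theorem isRightLimit_codedSet (h : S n = false) : IsRightLimit (codedSet S) (4 * n + 1) := by
  intro x _ hax
  obtain ⟨s, hs, t, ht, htK, hst, htx⟩ := exists_mem_lt_notMem_puncturedUnit (sub_pos.2 hax)
  have hs₀ := (puncturedUnit_subset_Ioo hs).1
  refine ⟨4 * n + 1 + t, ?_, 4 * n + 1 + s, block_subset_codedSet S n ?_,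
    by linarith, by linarith, by linarith⟩
  · rw [mem_codedSet_iff_mem_block ⟨by linarith [ht.1], by linarith [ht.2]⟩, h]
    change 4 * n + 1 + t - (4 * n + 1) ∉ puncturedUnit
    rwa [add_sub_cancel_left]
  · rw [h]
    change 4 * n + 1 + s - (4 * n + 1) ∈ puncturedUnit
    rwa [add_sub_cancel_left]

theorem isLeftLimitGap_specialCut (h : S n = true) : IsLeftLimitGap (specialCut S n) := by
  have hp : specialPoint S n = 4 * n + 2 := if_pos h
  obtain ⟨h₁, h₂⟩ := exists_mem_codedSet_around_specialPoint S n
  rw [hp] at h₁ h₂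
  rw [specialCut, hp]
  exact isLeftLimitGap_cut (isOpen_codedSet S) (hp ▸ specialPoint_notMem_codedSet S n) h₁ h₂
    (isLeftLimit_codedSet h)

theorem isRightLimitGap_specialCut (h : S n = false) : IsRightLimitGap (specialCut S n) := by
  have hp : specialPoint S n = 4 * n + 1 := if_neg (by simp [h])
  obtain ⟨h₁, h₂⟩ := exists_mem_codedSet_around_specialPoint S n
  rw [hp] at h₁ h₂
  rw [specialCut, hp]
  exact isRightLimitGap_cut (isOpen_codedSet S) (hp ▸ specialPoint_notMem_codedSet S n) h₁ h₂
    (isRightLimit_codedSet h)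

theorem exists_eq_specialCut_of_isLeftLimit (ha : a ∉ codedSet S) (ha₀ : 0 < a)
    (hL : IsLeftLimit (codedSet S) a) : ∃ n, S n = true ∧ cut (codedSet S) a = specialCut S n := by
  obtain ⟨n, rfl | rfl | ⟨ha, hab⟩ | ha⟩ := exists_of_notMem_codedSet ha ha₀
  · exact absurd hL (not_isLeftLimit_of_Ioo_subset (x := 4 * n) (by linarith) le_rfl
      (Ioo_subset_codedSet_left S n) (by simp))
  · cases h : S n
    · refine absurd hL (not_isLeftLimit_of_Ioo_subset (x := 4 * n + 1 + 2⁻¹) (by linarith) le_rfl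
        (fun y hy => block_subset_codedSet S n ?_) (by simp))
      rw [h]
      exact Ioo_half_one_subset_puncturedUnit ⟨by linarith [hy.1], by linarith [hy.2]⟩
    · exact ⟨n, h, by rw [specialCut, specialPoint, if_pos h]⟩
  · obtain ⟨ε, hε, hl, -⟩ := exists_punctured_nhd_subset_block ⟨ha.1, by linarith [ha.2]⟩ hab
    exact absurd hL (not_isLeftLimit_of_Ioo_subset (by linarith) le_rfl
      (hl.trans (block_subset_codedSet S n)) (by simp))
  · exact absurd hL (not_isLeftLimit_of_Ioo_subset (x := 4 * n + 2) (by linarith) ha.1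
      (Ioo_subset_codedSet_right S n)
      fun y hy h => notMem_codedSet_of_mem_Icc ⟨h.1, h.2.le.trans ha.2⟩ hy)

theorem exists_eq_specialCut_of_isRightLimit (ha : a ∉ codedSet S) (ha₀ : 0 < a)
    (hR : IsRightLimit (codedSet S) a) :
    ∃ n, S n = false ∧ cut (codedSet S) a = specialCut S n := by
  obtain ⟨n, rfl | rfl | ⟨ha, hab⟩ | ha⟩ := exists_of_notMem_codedSet ha ha₀
  · cases h : S n
    · exact ⟨n, h, by rw [specialCut, specialPoint, if_neg (by simp [h])]⟩
    · refine absurd hR (not_isRightLimit_of_Ioo_subset (x := 4 * n + 1 + 2⁻¹) (by linarith) le_rfl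
        (fun y hy => block_subset_codedSet S n ?_) (by simp))
      rw [h]
      exact Ioo_half_one_subset_puncturedUnit ⟨by linarith [hy.2], by linarith [hy.1]⟩
  · exact absurd hR (not_isRightLimit_of_Ioo_subset (x := 4 * n + 3) (by linarith) le_rfl
      (Ioo_subset_codedSet_right S n) (by simp))
  · obtain ⟨ε, hε, -, hr⟩ := exists_punctured_nhd_subset_block ⟨ha.1, by linarith [ha.2]⟩ hab
    exact absurd hR (not_isRightLimit_of_Ioo_subset (by linarith) le_rfl
      (hr.trans (block_subset_codedSet S n)) (by simp))
  · refine absurd hR (not_isRightLimit_of_Ioo_subset (x := 4 * n + 5) (by linarith) ha.2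
      (fun y hy => Ioo_subset_codedSet_left S (n + 1) ?_)
      fun y hy h => notMem_codedSet_of_mem_Icc ⟨ha.1.trans h.1.le, h.2⟩ hy)
    push_cast
    exact ⟨by linarith [hy.1], by linarith [hy.2]⟩

theorem IsLeftLimitGap.exists_eq_specialCut {D : Set (codedSet S)} (hD : IsLeftLimitGap D) :
    ∃ n, S n = true ∧ D = specialCut S n := by
  obtain ⟨a, ha, rfl, hL⟩ := hD.exists_eq_cut
  obtain ⟨⟨x, hx⟩, hxa⟩ := hD.1.nonempty
  exact exists_eq_specialCut_of_isLeftLimit ha ((pos_of_mem_codedSet hx).trans hxa) hL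

theorem IsRightLimitGap.exists_eq_specialCut {D : Set (codedSet S)} (hD : IsRightLimitGap D) :
    ∃ n, S n = false ∧ D = specialCut S n := by
  obtain ⟨a, ha, rfl, hR⟩ := hD.exists_eq_cut
  obtain ⟨⟨x, hx⟩, hxa⟩ := hD.1.nonempty
  exact exists_eq_specialCut_of_isRightLimit ha ((pos_of_mem_codedSet hx).trans hxa) hR

theorem specialCut_strictMono (S : ℕ → Bool) : StrictMono (specialCut S) := by
  intro n m hnm
  have hnm' : (n : ℝ) + 1 ≤ m := by exact_mod_cast hnm
  have hn := specialPoint_mem_Icc S n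
  have hm := specialPoint_mem_Icc S m
  refine (ssubset_iff_of_subset (cut_mono (by linarith [hn.2, hm.1]))).2
    ⟨⟨4 * m + 2⁻¹, Ioo_subset_codedSet_left S m ⟨by linarith, by linarith⟩⟩, ?_, ?_⟩
  · show 4 * (m : ℝ) + 2⁻¹ < specialPoint S m
    linarith [hm.1]
  · show ¬(4 * (m : ℝ) + 2⁻¹ < specialPoint S n)
    linarith [hn.2]

theorem exists_strictMono_image_specialCut (e : codedSet S ≃o codedSet T) :
    ∃ k : ℕ → ℕ, StrictMono k ∧ ∀ n, T (k n) = S n ∧ e '' specialCut S n = specialCut T (k n) := by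
  have : ∀ n, ∃ m, T m = S n ∧ e '' specialCut S n = specialCut T m := by
    intro n
    cases h : S n
    · exact ((isRightLimitGap_specialCut h).image e).exists_eq_specialCut
    · exact ((isLeftLimitGap_specialCut h).image e).exists_eq_specialCut
  choose k hk using this
  refine ⟨k, fun n m hnm => ?_, hk⟩
  rw [← (specialCut_strictMono T).lt_iff_lt, ← (hk n).2, ← (hk m).2]
  exact e.injective.image_strictMono (specialCut_strictMono S hnm)

theorem eq_of_orderIso (e : codedSet S ≃o codedSet T) : S = T := by
  obtain ⟨k, hk, hkS⟩ := exists_strictMono_image_specialCut e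
  obtain ⟨k', hk', hk'T⟩ := exists_strictMono_image_specialCut e.symm
  have hk'k : ∀ n, k' (k n) = n := fun n => (specialCut_strictMono S).injective <| by
    rw [← (hk'T _).2, ← (hkS n).2, e.symm_image_image]
  funext n
  have hkn : k n = n := le_antisymm (by simpa [hk'k] using hk'.id_le (k n)) (hk.id_le n)
  rw [← (hkS n).1, hkn]

end SpecialCuts

noncomputable def flipStrips (S T : ℕ → Bool) (x : ℝ) : ℝ :=
  if S ⌊x / 4⌋₊ = T ⌊x / 4⌋₊ then x else 8 * ⌊x / 4⌋₊ + 3 - x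

section FlipStrips

variable {S T : ℕ → Bool} {n : ℕ} {x y : ℝ}

theorem flipStrips_of_mem_Ioo (hx : x ∈ Ioo (4 * n : ℝ) (4 * n + 3)) :
    flipStrips S T x = if S n = T n then x else 8 * n + 3 - x := by
  have : ⌊x / 4⌋₊ = n := by
    rw [Nat.floor_eq_iff (by linarith [hx.1, (Nat.cast_nonneg n : (0 : ℝ) ≤ n)])]
    constructor <;> linarith [hx.1, hx.2]
  rw [flipStrips, this]

theorem flipStrips_mem (hx : x ∈ codedSet S) : flipStrips S T x ∈ codedSet T := by
  obtain ⟨n, hxn, hx⟩ := exists_mem_strip_of_mem_codedSet hx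
  rw [flipStrips_of_mem_Ioo hx]
  apply strip_subset_codedSet T n
  split_ifs with h
  · rwa [← h]
  · rw [Bool.eq_not_iff.2 (Ne.symm h), show (8 : ℝ) * n + 3 - x = 2 * (4 * n) + 3 - x by ring]
    exact reflect_mem_strip_iff.2 hxn

theorem flipStrips_flipStrips (hx : x ∈ codedSet S) : flipStrips T S (flipStrips S T x) = x := by
  obtain ⟨n, -, hx⟩ := exists_mem_strip_of_mem_codedSet hx
  rw [flipStrips_of_mem_Ioo hx]
  split_ifs with h
  · rw [flipStrips_of_mem_Ioo hx, if_pos h.symm]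
  · rw [flipStrips_of_mem_Ioo ⟨by linarith [hx.2], by linarith [hx.1]⟩, if_neg (Ne.symm h)]
    ring

theorem dist_flipStrips (hx : x ∈ codedSet S) (hy : y ∈ codedSet S) (hxy : dist x y < 1) :
    dist (flipStrips S T x) (flipStrips S T y) = dist x y := by
  obtain ⟨n, -, hxn⟩ := exists_mem_strip_of_mem_codedSet hx
  obtain ⟨m, -, hym⟩ := exists_mem_strip_of_mem_codedSet hy
  rw [Real.dist_eq, abs_lt] at hxy
  have h₁ : (4 * n : ℝ) < 4 * m + 4 := by linarith [hxn.1, hym.2]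
  have h₂ : (4 * m : ℝ) < 4 * n + 4 := by linarith [hxn.2, hym.1]
  have h₁ : 4 * n < 4 * m + 4 := by exact_mod_cast h₁
  have h₂ : 4 * m < 4 * n + 4 := by exact_mod_cast h₂
  obtain rfl : m = n := by omega
  rw [flipStrips_of_mem_Ioo hxn, flipStrips_of_mem_Ioo hym]
  split_ifs
  · rfl
  · rw [Real.dist_eq, Real.dist_eq, ← abs_neg]; ring_nf

noncomputable def flipEquiv (S T : ℕ → Bool) : codedSet S ≃ codedSet T where
  toFun x := ⟨flipStrips S T x, flipStrips_mem x.2⟩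
  invFun y := ⟨flipStrips T S y, flipStrips_mem y.2⟩
  left_inv x := Subtype.ext (flipStrips_flipStrips x.2)
  right_inv y := Subtype.ext (flipStrips_flipStrips y.2)

theorem uniformContinuous_flipEquiv (S T : ℕ → Bool) : UniformContinuous (flipEquiv S T) := by
  refine Metric.uniformContinuous_iff.2 fun ε hε => ⟨min ε 1, by positivity, fun {x y} hxy => ?_⟩
  rw [Subtype.dist_eq] at hxy ⊢
  calc dist (flipStrips S T x) (flipStrips S T y)
      = dist (x : ℝ) y := dist_flipStrips x.2 y.2 (hxy.trans_le (min_le_right _ _))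
    _ < ε := hxy.trans_le (min_le_left _ _)

end FlipStrips

theorem codedSet_injective : Function.Injective codedSet := by
  intro S T h
  funext n
  rw [Bool.eq_iff_iff, ← mem_codedSet_iff_apply_eq_true, ← mem_codedSet_iff_apply_eq_true, h]

/-- There is a family of open subsets of `ℝ`, of cardinality
continuum, any two distinct members of which are metrically similar (there is a
bijection that is uniformly continuous in both directions) but not
order-isomorphic (there is no strictly increasing bijection between them). -/
theorem stmt_3 :
    ∃ 𝓖 : Set (Set ℝ),
      Cardinal.mk 𝓖 = Cardinal.continuum ∧
      (∀ U ∈ 𝓖, IsOpen U) ∧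
      (∀ U ∈ 𝓖, ∀ V ∈ 𝓖, U ≠ V →
        (∃ f : ↥U ≃ ↥V, UniformContinuous ⇑f ∧ UniformContinuous ⇑f.symm) ∧
        ¬ ∃ f : ↥U → ↥V, Function.Bijective f ∧ StrictMono f) := by
  refine ⟨range codedSet, ?_, ?_, ?_⟩
  · rw [Cardinal.mk_range_eq _ codedSet_injective]
    simp
  · rintro _ ⟨S, rfl⟩
    exact isOpen_codedSet S
  · rintro _ ⟨S, rfl⟩ _ ⟨T, rfl⟩ hST
    refine ⟨⟨flipEquiv S T, uniformContinuous_flipEquiv S T, uniformContinuous_flipEquiv T S⟩, ?_⟩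
    rintro ⟨f, hf, hf_mono⟩
    exact hST (congrArg codedSet (eq_of_orderIso (hf_mono.orderIsoOfSurjective f hf.2)))
end

section
/- There exists a family 𝓗 of closed subsets of ℝ with the cardinality of the continuum such that no connected component of any member of 𝓗 (as a subspace of ℝ) is a singleton, and for any two distinct A, B ∈ 𝓗 there exists a bijection f : A → B with both f and f⁻¹ uniformly continuous, but there exists no strictly increasing bijection from A onto B. -/
/-!
Let `core` be `[0, 1]` together with the intervals `[-2⁻ᵏ, -(3/4)·2⁻ᵏ]`, whose gaps accumulate at
`0` from the left, and for `b : ℕ → Bool` let `orientedBlocks b` be the union of copies of `core`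
centered at `3n + 1`, the `n`-th one reflected when `b n = true`. Reflecting blocks independently is
an isometry on each block and the blocks are at distance `1`, so any two of these sets are
uniformly equivalent. In the order of such a set, the centers are exactly the points at which jumps
(covering pairs) accumulate: from the left in an unreflected block, from the right in a reflected
one. An order isomorphism preserves both properties, so it maps centers to centers; as they are
ordered like `ℕ` it fixes each of them, and hence each orientation `b n`.
-/

open Set
open scoped Pointwise

section JumpLimit

variable {α β : Type*} [LinearOrder α] [LinearOrder β]

def IsLeftJumpLimit (x : α) : Prop :=
  (∃ y, y < x) ∧ ∀ y < x, ∃ z w, y < z ∧ z ⋖ w ∧ w < x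

def IsRightJumpLimit (x : α) : Prop :=
  IsLeftJumpLimit (OrderDual.toDual x)

theorem IsLeftJumpLimit.orderIso (e : α ≃o β) {x : α} (h : IsLeftJumpLimit x) :
    IsLeftJumpLimit (e x) := by
  obtain ⟨⟨y₀, hy₀⟩, h⟩ := h
  refine ⟨⟨e y₀, e.lt_iff_lt.2 hy₀⟩, fun y hy => ?_⟩
  obtain ⟨z, w, hz, hzw, hw⟩ := h (e.symm y) (e.symm_apply_lt.2 hy)
  exact ⟨e z, e w, e.symm_apply_lt.1 hz, (apply_covBy_apply_iff e).2 hzw, e.lt_iff_lt.2 hw⟩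

theorem OrderIso.isLeftJumpLimit_apply_iff (e : α ≃o β) {x : α} :
    IsLeftJumpLimit (e x) ↔ IsLeftJumpLimit x :=
  ⟨fun h => by simpa using h.orderIso e.symm, fun h => h.orderIso e⟩

theorem OrderIso.isRightJumpLimit_apply_iff (e : α ≃o β) {x : α} :
    IsRightJumpLimit (e x) ↔ IsRightJumpLimit x :=
  e.dual.isLeftJumpLimit_apply_iff

theorem Subtype.covBy_iff_disjoint {S : Set α} {z w : S} :
    z ⋖ w ↔ (z : α) < w ∧ Disjoint (Ioo (z : α) w) S := by
  simp only [CovBy, ← Subtype.coe_lt_coe, Set.disjoint_left, mem_Ioo, Subtype.forall]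
  exact and_congr_right fun _ =>
    ⟨fun h a ha hS => h a hS ha.1 ha.2, fun h a hS h₁ h₂ => h ⟨h₁, h₂⟩ hS⟩

end JumpLimit

section GapLimit

variable {α : Type*} [LinearOrder α]

/-- Unlike `IsLeftJumpLimit` on the subtype, this quantifies over all `y < x`, not only over points
of `S`, which makes it local (`IsLeftGapLimit.of_local`); the two agree for closed `S`. -/
def IsLeftGapLimit (S : Set α) (x : α) : Prop :=
  ∀ y < x, ∃ z ∈ S, ∃ w ∈ S, y < z ∧ z < w ∧ w < x ∧ Disjoint (Ioo z w) S

theorem not_isLeftGapLimit_of_disjoint {S : Set α} {x y : α} (hyx : y < x)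
    (hS : Disjoint (Ioo y x) S) : ¬IsLeftGapLimit S x := fun h => by
  obtain ⟨z, hz, w, -, hyz, hzw, hwx, -⟩ := h y hyx
  exact hS.notMem_of_mem_left ⟨hyz, hzw.trans hwx⟩ hz

theorem not_isLeftGapLimit_of_Icc_subset [DenselyOrdered α] {S : Set α} {p r x : α}
    (hS : Icc p r ⊆ S) (hx : x ∈ Ioc p r) : ¬IsLeftGapLimit S x := fun h => by
  obtain ⟨z, -, w, -, hpz, hzw, hwx, hgap⟩ := h p hx.1
  obtain ⟨v, hv⟩ := exists_between hzw
  exact hgap.notMem_of_mem_left hv (hS ⟨(hpz.trans hv.1).le, (hv.2.trans hwx).le.trans hx.2⟩)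

end GapLimit

section LocalGapLimit

variable {𝕜 : Type*} [Field 𝕜] [LinearOrder 𝕜] [IsStrictOrderedRing 𝕜]

theorem IsLeftGapLimit.of_local {S T : Set 𝕜} {x c δ : 𝕜} (hδ : 0 < δ)
    (hST : ∀ y ∈ Ioo (x - δ) x, y ∈ S ↔ y - c ∈ T) (h : IsLeftGapLimit S x) :
    IsLeftGapLimit T (x - c) := by
  intro y hy
  obtain ⟨z, hz, w, hw, hyz, hzw, hwx, hgap⟩ :=
    h (max (y + c) (x - δ)) (max_lt (by linarith) (by linarith))
  have hy' := le_max_left (y + c) (x - δ)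
  have hδ' := le_max_right (y + c) (x - δ)
  refine ⟨z - c, (hST z ⟨by linarith, by linarith⟩).1 hz, w - c,
    (hST w ⟨by linarith, by linarith⟩).1 hw, by linarith, by linarith, by linarith,
    Set.disjoint_left.2 fun v hv hvT => ?_⟩
  have hvc : v + c ∈ Ioo z w := ⟨by linarith [hv.1], by linarith [hv.2]⟩
  refine hgap.notMem_of_mem_left hvc ((hST _ ⟨by linarith [hvc.1], by linarith [hvc.2]⟩).2 ?_)
  rwa [add_sub_cancel_right]

theorem isLeftGapLimit_iff_of_local {S T : Set 𝕜} {x c δ : 𝕜} (hδ : 0 < δ)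
    (hST : ∀ y ∈ Ioo (x - δ) x, y ∈ S ↔ y - c ∈ T) :
    IsLeftGapLimit S x ↔ IsLeftGapLimit T (x - c) := by
  refine ⟨IsLeftGapLimit.of_local hδ hST, fun h => ?_⟩
  have hTS : ∀ y ∈ Ioo (x - c - δ) (x - c), y ∈ T ↔ y - -c ∈ S := fun y hy => by
    rw [hST (y - -c) ⟨by linarith [hy.1], by linarith [hy.2]⟩, sub_neg_eq_add,
      add_sub_cancel_right]
  simpa using h.of_local hδ hTS

end LocalGapLimit

def Set.negOrderIso {α : Type*} [AddCommGroup α] [LinearOrder α] [IsOrderedAddMonoid α]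
    (S : Set α) : (↥S)ᵒᵈ ≃o ↥(-S) where
  toFun x := ⟨-((OrderDual.ofDual x : S) : α), by simp⟩
  invFun y := OrderDual.toDual ⟨-(y : α), y.2⟩
  left_inv x := by simp
  right_inv y := by simp
  map_rel_iff' {x y} := by
    change -((OrderDual.ofDual x : S) : α) ≤ -((OrderDual.ofDual y : S) : α) ↔ _
    rw [neg_le_neg_iff, Subtype.coe_le_coe]
    rfl

section ClosedSubset

variable {α : Type*} [ConditionallyCompleteLinearOrder α] [TopologicalSpace α] [OrderTopology α]
  [NoMinOrder α]

theorem isLeftJumpLimit_iff_isLeftGapLimit {S : Set α} (hS : IsClosed S) (x : S) :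
    IsLeftJumpLimit x ↔ IsLeftGapLimit S x := by
  simp only [IsLeftJumpLimit, Subtype.covBy_iff_disjoint]
  constructor
  · rintro ⟨⟨y₀, hy₀⟩, h⟩ y hy
    -- the last point `s` of `S` below `max y y₀` has no point of `S` between it and `y`
    set s := sSup (S ∩ Iic (max y y₀))
    have hs : s ∈ S ∩ Iic (max y y₀) :=
      (hS.inter isClosed_Iic).csSup_mem ⟨y₀, y₀.2, le_max_right y _⟩ ⟨_, fun _ h => h.2⟩
    obtain ⟨z, w, hsz, ⟨hzw, hgap⟩, hwx⟩ :=
      h ⟨s, hs.1⟩ (Subtype.mk_lt_mk.2 (hs.2.trans_lt (max_lt hy hy₀)))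
    refine ⟨z, z.2, w, w.2, ?_, hzw, hwx, hgap⟩
    by_contra! hzy
    exact (Subtype.mk_lt_mk.1 hsz).not_ge
      (le_csSup ⟨_, fun _ h => h.2⟩ ⟨z.2, hzy.trans (le_max_left _ _)⟩)
  · intro h
    obtain ⟨y, hy⟩ := exists_lt (x : α)
    obtain ⟨z, hz, w, -, -, hzw, hwx, -⟩ := h y hy
    refine ⟨⟨⟨z, hz⟩, Subtype.mk_lt_mk.2 (hzw.trans hwx)⟩, fun y hy => ?_⟩
    obtain ⟨z, hz, w, hw, hyz, hzw, hwx, hgap⟩ := h y hy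
    exact ⟨⟨z, hz⟩, ⟨w, hw⟩, hyz, ⟨hzw, hgap⟩, hwx⟩

theorem isRightJumpLimit_iff_isLeftGapLimit_neg [AddCommGroup α] [IsOrderedAddMonoid α]
    {S : Set α} (hS : IsClosed S) (x : S) :
    IsRightJumpLimit x ↔ IsLeftGapLimit (-S) (-x) := by
  rw [IsRightJumpLimit, ← S.negOrderIso.isLeftJumpLimit_apply_iff,
    isLeftJumpLimit_iff_isLeftGapLimit hS.neg]
  rfl

end ClosedSubset

theorem uniformContinuous_of_dist_le_of_dist_lt {X Y : Type*} [PseudoMetricSpace X]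
    [PseudoMetricSpace Y] {f : X → Y} {r : ℝ} (hr : 0 < r)
    (h : ∀ x y, dist x y < r → dist (f x) (f y) ≤ dist x y) : UniformContinuous f :=
  Metric.uniformContinuous_iff.2 fun _ hε => ⟨_, lt_min hr hε, fun _ _ hxy =>
    (h _ _ (hxy.trans_le (min_le_left _ _))).trans_lt (hxy.trans_le (min_le_right _ _))⟩

theorem Subtype.connectedComponent_nontrivial {X : Type*} [TopologicalSpace X] {S T : Set X}
    (hT : IsPreconnected T) (hTn : T.Nontrivial) (hTS : T ⊆ S) {x : S} (hx : (x : X) ∈ T) :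
    (connectedComponent x).Nontrivial := by
  have hpre : IsPreconnected (Subtype.val ⁻¹' T : Set S) :=
    Topology.IsInducing.subtypeVal.isPreconnected_image.1 <| by
      rwa [Subtype.image_preimage_coe, inter_eq_right.2 hTS]
  obtain ⟨p, hp, r, hr, hpr⟩ := hTn
  exact ⟨⟨p, hTS hp⟩, hpre.subset_connectedComponent hx hp, ⟨r, hTS hr⟩,
    hpre.subset_connectedComponent hx hr, fun h => hpr (congrArg Subtype.val h)⟩

namespace JumpBlocks

noncomputable def halfPow (k : ℕ) : ℝ := 2⁻¹ ^ k

theorem halfPow_pos (k : ℕ) : 0 < halfPow k := by unfold halfPow; positivity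

theorem halfPow_zero : halfPow 0 = 1 := pow_zero _

theorem halfPow_succ (k : ℕ) : halfPow (k + 1) = halfPow k / 2 := by
  rw [halfPow, halfPow, pow_succ, div_eq_mul_inv]

theorem halfPow_le_one (k : ℕ) : halfPow k ≤ 1 := pow_le_one₀ (by norm_num) (by norm_num)

theorem halfPow_antitone : Antitone halfPow := fun _ _ h =>
  pow_le_pow_of_le_one (by norm_num) (by norm_num) h

def core : Set ℝ := Icc 0 1 ∪ ⋃ k, Icc (-halfPow k) (-(3 / 4 * halfPow k))

theorem Icc_subset_core : Icc 0 1 ⊆ core := subset_union_left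

theorem Icc_halfPow_subset_core (k : ℕ) : Icc (-halfPow k) (-(3 / 4 * halfPow k)) ⊆ core :=
  (subset_iUnion (fun k => Icc (-halfPow k) (-(3 / 4 * halfPow k))) k).trans subset_union_right

theorem core_subset_Icc : core ⊆ Icc (-1) 1 := by
  rintro u (hu | hu)
  · exact Icc_subset_Icc (by norm_num) le_rfl hu
  · obtain ⟨k, hk⟩ := mem_iUnion.1 hu
    have := halfPow_le_one k
    have := halfPow_pos k
    exact ⟨by linarith [hk.1], by linarith [hk.2]⟩

theorem disjoint_Ioo_core (k : ℕ) :
    Disjoint (Ioo (-(3 / 4 * halfPow k)) (-halfPow (k + 1))) core := by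
  rw [Set.disjoint_left]
  rintro u ⟨hu₁, hu₂⟩ (hu | hu)
  · linarith [hu.1, halfPow_pos (k + 1)]
  · obtain ⟨j, hj⟩ := mem_iUnion.1 hu
    rcases le_or_gt j k with hjk | hjk
    · linarith [hj.2, halfPow_antitone hjk]
    · linarith [hj.1, halfPow_antitone (Nat.succ_le_of_lt hjk)]

theorem core_eq_Icc_diff :
    core = Icc (-1) 1 \ ⋃ k, Ioo (-(3 / 4 * halfPow k)) (-halfPow (k + 1)) := by
  refine Subset.antisymm (fun u hu => ⟨core_subset_Icc hu, fun hgap => ?_⟩) ?_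
  · obtain ⟨k, hk⟩ := mem_iUnion.1 hgap
    exact (disjoint_Ioo_core k).notMem_of_mem_left hk hu
  · rintro u ⟨hu, hgap⟩
    rcases le_or_gt 0 u with hu₀ | hu₀
    · exact Icc_subset_core ⟨hu₀, hu.2⟩
    obtain ⟨k, hk₁, hk₂⟩ := exists_nat_pow_near_of_lt_one (neg_pos.2 hu₀) (by linarith [hu.1])
      (by norm_num : (0 : ℝ) < 2⁻¹) (by norm_num)
    refine Icc_halfPow_subset_core k ⟨by rw [halfPow]; linarith, not_lt.1 fun h => hgap ?_⟩
    exact mem_iUnion.2 ⟨k, h, by rw [halfPow]; linarith⟩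

theorem isClosed_core : IsClosed core := by
  rw [core_eq_Icc_diff]
  exact isClosed_Icc.sdiff (isOpen_iUnion fun _ => isOpen_Ioo)

theorem zero_mem_core : (0 : ℝ) ∈ core := Icc_subset_core ⟨le_rfl, zero_le_one⟩

theorem exists_Icc_subset_core {u : ℝ} (hu : u ∈ core) :
    ∃ p r, p < r ∧ u ∈ Icc p r ∧ Icc p r ⊆ core := by
  rcases hu with hu | hu
  · exact ⟨0, 1, one_pos, hu, Icc_subset_core⟩
  · obtain ⟨k, hk⟩ := mem_iUnion.1 hu
    exact ⟨_, _, by linarith [halfPow_pos k], hk, Icc_halfPow_subset_core k⟩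

theorem isLeftGapLimit_core_zero : IsLeftGapLimit core 0 := by
  intro y hy
  obtain ⟨k, hk⟩ := exists_pow_lt_of_lt_one (neg_pos.2 hy) (by norm_num : (2 : ℝ)⁻¹ < 1)
  have hk' : halfPow k < -y := hk
  have hpos := halfPow_pos k
  refine ⟨-(3 / 4 * halfPow k), Icc_halfPow_subset_core k ⟨by linarith, le_rfl⟩,
    -halfPow (k + 1), Icc_halfPow_subset_core (k + 1) ⟨le_rfl, ?_⟩, by linarith, ?_, ?_,
    disjoint_Ioo_core k⟩ <;> rw [halfPow_succ] <;> linarith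

theorem eq_zero_of_isLeftGapLimit_core {u : ℝ} (hu : u ∈ core) (h : IsLeftGapLimit core u) :
    u = 0 := by
  -- every other point of `core` has an interval or a gap of `core` immediately to its left
  rcases hu with hu | hu
  · refine (hu.1.eq_or_lt.resolve_right fun hu₀ => ?_).symm
    exact not_isLeftGapLimit_of_Icc_subset Icc_subset_core ⟨hu₀, hu.2⟩ h
  exfalso
  obtain ⟨k, hk⟩ := mem_iUnion.1 hu
  rcases hk.1.eq_or_lt with rfl | hlt
  · cases k with
    | zero =>
      refine not_isLeftGapLimit_of_disjoint (by rw [halfPow_zero]; norm_num : -2 < -halfPow 0)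
        ?_ h
      refine (Set.disjoint_left.2 fun v hv hv' => ?_).mono_right core_subset_Icc
      rw [halfPow_zero] at hv
      linarith [hv.2, hv'.1]
    | succ j =>
      refine not_isLeftGapLimit_of_disjoint ?_ (disjoint_Ioo_core j) h
      rw [halfPow_succ]
      linarith [halfPow_pos j]
  · exact not_isLeftGapLimit_of_Icc_subset (Icc_halfPow_subset_core k) ⟨hlt, hk.2⟩ h

theorem not_isLeftGapLimit_neg_core {u : ℝ} (hu : u ∈ -core) : ¬IsLeftGapLimit (-core) u := by
  rcases mem_neg.1 hu with hu | hu
  · rcases (neg_le.1 hu.2).eq_or_lt with rfl | hlt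
    · refine not_isLeftGapLimit_of_disjoint (by norm_num : (-2 : ℝ) < -1)
        (Set.disjoint_left.2 fun v hv hv' => ?_)
      linarith [hv.2, (core_subset_Icc (mem_neg.1 hv')).2]
    · refine not_isLeftGapLimit_of_Icc_subset (fun v hv => ?_) ⟨hlt, neg_nonneg.1 hu.1⟩
      exact mem_neg.2 (Icc_subset_core ⟨by linarith [hv.2], by linarith [hv.1]⟩)
  obtain ⟨k, hk⟩ := mem_iUnion.1 hu
  have hk₁ : 3 / 4 * halfPow k ≤ u := by linarith [hk.2]
  rcases hk₁.eq_or_lt with rfl | hlt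
  · refine not_isLeftGapLimit_of_disjoint (y := halfPow (k + 1))
      (by rw [halfPow_succ]; linarith [halfPow_pos k]) (Set.disjoint_left.2 fun v hv hv' => ?_)
    exact (disjoint_Ioo_core k).notMem_of_mem_left ⟨by linarith [hv.2], by linarith [hv.1]⟩
      (mem_neg.1 hv')
  · refine not_isLeftGapLimit_of_Icc_subset (r := halfPow k) (fun v hv => ?_)
      ⟨hlt, by linarith [hk.1]⟩
    exact mem_neg.2 (Icc_halfPow_subset_core k ⟨by linarith [hv.2], by linarith [hv.1]⟩)

def sign (t : Bool) : ℝ := if t then -1 else 1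

@[simp] theorem sign_false : sign false = 1 := rfl

@[simp] theorem sign_true : sign true = -1 := rfl

@[simp] theorem sign_mul_sign (t : Bool) : sign t * sign t = 1 := by cases t <;> norm_num

@[simp] theorem abs_sign (t : Bool) : |sign t| = 1 := by cases t <;> norm_num

theorem sign_ne_zero (t : Bool) : sign t ≠ 0 := by cases t <;> norm_num

def orientedCore (t : Bool) : Set ℝ := {u | sign t * u ∈ core}

theorem mem_orientedCore {t : Bool} {u : ℝ} : u ∈ orientedCore t ↔ sign t * u ∈ core := Iff.rfl

@[simp] theorem orientedCore_false : orientedCore false = core := by simp [orientedCore]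

@[simp] theorem orientedCore_true : orientedCore true = -core := by
  ext u; simp [orientedCore]

theorem neg_orientedCore (t : Bool) : -orientedCore t = orientedCore (!t) := by
  cases t <;> simp

theorem abs_le_one_of_mem_orientedCore {t : Bool} {u : ℝ} (hu : u ∈ orientedCore t) :
    |u| ≤ 1 := by
  simpa [abs_mul] using abs_le.2 (core_subset_Icc hu)

theorem isClosed_orientedCore (t : Bool) : IsClosed (orientedCore t) :=
  isClosed_core.preimage (continuous_const.mul continuous_id)

theorem isLeftGapLimit_orientedCore_iff {t : Bool} {u : ℝ} (hu : u ∈ orientedCore t) :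
    IsLeftGapLimit (orientedCore t) u ↔ t = false ∧ u = 0 := by
  cases t
  · rw [orientedCore_false] at hu ⊢
    exact ⟨fun h => ⟨rfl, eq_zero_of_isLeftGapLimit_core hu h⟩,
      fun ⟨_, hu₀⟩ => hu₀ ▸ isLeftGapLimit_core_zero⟩
  · rw [orientedCore_true] at hu ⊢
    simpa using not_isLeftGapLimit_neg_core hu

def center (n : ℕ) : ℝ := 3 * n + 1

theorem center_strictMono : StrictMono center := fun m n h => by
  unfold center; gcongr

theorem eq_of_abs_center_sub_center_lt {m n : ℕ} (h : |center m - center n| < 3) : m = n := by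
  rw [abs_lt] at h
  unfold center at h
  have hmn : m < n + 1 := by exact_mod_cast (show (m : ℝ) < n + 1 by linarith [h.2])
  have hnm : n < m + 1 := by exact_mod_cast (show (n : ℝ) < m + 1 by linarith [h.1])
  omega

theorem exists_center_eq_iff {x : ℝ} {n : ℕ} (hx : |x - center n| ≤ 1) {P : ℕ → Prop} :
    (∃ m, x = center m ∧ P m) ↔ x = center n ∧ P n := by
  refine ⟨fun ⟨m, hm, hP⟩ => ?_, fun h => ⟨n, h⟩⟩
  obtain rfl : m = n := eq_of_abs_center_sub_center_lt (by rw [← hm]; linarith)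
  exact ⟨hm, hP⟩

def orientedBlocks (b : ℕ → Bool) : Set ℝ := ⋃ n, {x | x - center n ∈ orientedCore (b n)}

theorem mem_orientedBlocks {b : ℕ → Bool} {x : ℝ} :
    x ∈ orientedBlocks b ↔ ∃ n, x - center n ∈ orientedCore (b n) := mem_iUnion

theorem mem_orientedBlocks_iff_of_abs_lt {b : ℕ → Bool} {x : ℝ} {n : ℕ}
    (hx : |x - center n| < 2) : x ∈ orientedBlocks b ↔ x - center n ∈ orientedCore (b n) := by
  refine ⟨fun h => ?_, fun h => mem_orientedBlocks.2 ⟨n, h⟩⟩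
  obtain ⟨m, hm⟩ := mem_orientedBlocks.1 h
  have hm' := abs_le.1 (abs_le_one_of_mem_orientedCore hm)
  have hx' := abs_lt.1 hx
  obtain rfl : m = n :=
    eq_of_abs_center_sub_center_lt (abs_lt.2 ⟨by linarith, by linarith⟩)
  exact hm

theorem isClosed_orientedBlocks (b : ℕ → Bool) : IsClosed (orientedBlocks b) := by
  refine LocallyFinite.isClosed_iUnion (fun x => ?_)
    (fun n => (isClosed_orientedCore (b n)).preimage (continuous_sub_right _))
  refine ⟨Ioo (x - 1) (x + 1), Ioo_mem_nhds (by linarith) (by linarith),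
    (finite_Iic ⌈x + 2⌉₊).subset fun n ⟨y, hy, hyx⟩ => ?_⟩
  have := abs_le.1 (abs_le_one_of_mem_orientedCore hy)
  have : (n : ℝ) ≤ ⌈x + 2⌉₊ := by
    unfold center at this; linarith [hyx.2, Nat.le_ceil (x + 2), Nat.cast_nonneg (α := ℝ) n]
  exact Nat.cast_le.1 this

theorem exists_isPreconnected_subset_orientedBlocks {b : ℕ → Bool} {x : ℝ}
    (hx : x ∈ orientedBlocks b) :
    ∃ T, IsPreconnected T ∧ T.Nontrivial ∧ x ∈ T ∧ T ⊆ orientedBlocks b := by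
  obtain ⟨n, hn⟩ := mem_orientedBlocks.1 hx
  obtain ⟨p, r, hpr, hu, hsub⟩ := exists_Icc_subset_core hn
  set f : ℝ → ℝ := fun v => center n + sign (b n) * v
  have hf : Function.Injective f :=
    (add_right_injective _).comp (mul_right_injective₀ (sign_ne_zero _))
  refine ⟨f '' Icc p r, isPreconnected_Icc.image _ (by fun_prop),
    ⟨f p, mem_image_of_mem f (left_mem_Icc.2 hpr.le), f r,
      mem_image_of_mem f (right_mem_Icc.2 hpr.le), hf.ne hpr.ne⟩, ⟨_, hu, ?_⟩, ?_⟩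
  · simp only [f, ← mul_assoc, sign_mul_sign, one_mul, add_sub_cancel]
  · rintro _ ⟨v, hv, rfl⟩
    refine mem_orientedBlocks.2 ⟨n, ?_⟩
    simpa [mem_orientedCore, f, ← mul_assoc] using hsub hv

theorem isLeftJumpLimit_iff {b : ℕ → Bool} (x : orientedBlocks b) :
    IsLeftJumpLimit x ↔ ∃ n, (x : ℝ) = center n ∧ b n = false := by
  obtain ⟨n, hn⟩ := mem_orientedBlocks.1 x.2
  have hx := abs_le.1 (abs_le_one_of_mem_orientedCore hn)
  have hloc : ∀ y ∈ Ioo ((x : ℝ) - 1) x, y ∈ orientedBlocks b ↔ y - center n ∈ orientedCore (b n) :=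
    fun y hy => mem_orientedBlocks_iff_of_abs_lt (abs_lt.2 ⟨by linarith [hy.1], by linarith [hy.2]⟩)
  rw [isLeftJumpLimit_iff_isLeftGapLimit (isClosed_orientedBlocks b),
    isLeftGapLimit_iff_of_local one_pos hloc, isLeftGapLimit_orientedCore_iff hn,
    exists_center_eq_iff (abs_le.2 hx), sub_eq_zero, and_comm]

theorem isRightJumpLimit_iff {b : ℕ → Bool} (x : orientedBlocks b) :
    IsRightJumpLimit x ↔ ∃ n, (x : ℝ) = center n ∧ b n = true := by
  obtain ⟨n, hn⟩ := mem_orientedBlocks.1 x.2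
  have hx := abs_le.1 (abs_le_one_of_mem_orientedCore hn)
  have hn' : -(x : ℝ) - -center n ∈ orientedCore (!b n) := by
    rwa [← neg_orientedCore, mem_neg, show -(-(x : ℝ) - -center n) = x - center n by ring]
  have hloc : ∀ y ∈ Ioo (-(x : ℝ) - 1) (-x),
      y ∈ -orientedBlocks b ↔ y - -center n ∈ orientedCore (!b n) := fun y hy => by
    rw [mem_neg,
      mem_orientedBlocks_iff_of_abs_lt (abs_lt.2 ⟨by linarith [hy.2], by linarith [hy.1]⟩),
      ← neg_orientedCore, mem_neg, show -(y - -center n) = -y - center n by ring]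
  rw [isRightJumpLimit_iff_isLeftGapLimit_neg (isClosed_orientedBlocks b),
    isLeftGapLimit_iff_of_local one_pos hloc, isLeftGapLimit_orientedCore_iff hn',
    exists_center_eq_iff (abs_le.2 hx), Bool.not_eq_false', sub_eq_zero, neg_inj, and_comm]

def centerPoint (b : ℕ → Bool) (n : ℕ) : orientedBlocks b :=
  ⟨center n, mem_orientedBlocks.2 ⟨n, by simp [orientedCore, zero_mem_core]⟩⟩

theorem isLeftJumpLimit_centerPoint_iff {b : ℕ → Bool} {n : ℕ} :
    IsLeftJumpLimit (centerPoint b n) ↔ b n = false := by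
  rw [isLeftJumpLimit_iff, exists_center_eq_iff (n := n) (by simp [centerPoint])]
  simp [centerPoint]

theorem isLeftJumpLimit_or_isRightJumpLimit_iff {b : ℕ → Bool} (x : orientedBlocks b) :
    IsLeftJumpLimit x ∨ IsRightJumpLimit x ↔ ∃ n, (x : ℝ) = center n := by
  rw [isLeftJumpLimit_iff, isRightJumpLimit_iff, ← exists_or]
  simp only [← and_or_left]
  exact exists_congr fun n => and_iff_left (by cases b n <;> simp)

theorem exists_orderIso_apply_centerPoint {b c : ℕ → Bool}
    (e : orientedBlocks b ≃o orientedBlocks c) (n : ℕ) :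
    ∃ m, e (centerPoint b n) = centerPoint c m := by
  obtain ⟨m, hm⟩ := (isLeftJumpLimit_or_isRightJumpLimit_iff (e (centerPoint b n))).1 <| by
    rw [e.isLeftJumpLimit_apply_iff, e.isRightJumpLimit_apply_iff,
      isLeftJumpLimit_or_isRightJumpLimit_iff]
    exact ⟨n, rfl⟩
  exact ⟨m, Subtype.ext hm⟩

theorem eq_of_orderIso {b c : ℕ → Bool} (e : orientedBlocks b ≃o orientedBlocks c) : b = c := by
  choose h hh using exists_orderIso_apply_centerPoint e
  have hmono : StrictMono h := fun m n hmn => center_strictMono.lt_iff_lt.1 <| by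
    have hlt : centerPoint b m < centerPoint b n := center_strictMono hmn
    have := e.strictMono hlt
    rwa [hh, hh] at this
  have hsurj : Function.Surjective h := fun m => by
    obtain ⟨n, hn⟩ := exists_orderIso_apply_centerPoint e.symm m
    have : centerPoint c (h n) = centerPoint c m := by rw [← hh, ← hn, e.apply_symm_apply]
    exact ⟨n, center_strictMono.injective (congrArg Subtype.val this)⟩
  have hid (n : ℕ) : h n = n :=
    DFunLike.congr_fun (Subsingleton.elim (hmono.orderIsoOfSurjective h hsurj) (OrderIso.refl ℕ)) n
  funext n
  have := e.isLeftJumpLimit_apply_iff (x := centerPoint b n)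
  rw [hh, hid, isLeftJumpLimit_centerPoint_iff, isLeftJumpLimit_centerPoint_iff] at this
  revert this
  cases b n <;> cases c n <;> simp

noncomputable def blockIndex (x : ℝ) : ℕ := ⌊x / 3⌋₊

theorem blockIndex_eq {x : ℝ} {n : ℕ} (hx : |x - center n| ≤ 1) : blockIndex x = n := by
  have hx := abs_le.1 hx
  unfold center at hx
  rw [blockIndex, Nat.floor_eq_iff (by linarith [Nat.cast_nonneg (α := ℝ) n])]
  constructor <;> linarith

noncomputable def reorient (b c : ℕ → Bool) (x : ℝ) : ℝ :=
  center (blockIndex x) +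
    sign (b (blockIndex x)) * sign (c (blockIndex x)) * (x - center (blockIndex x))

theorem reorient_sub_center {b c : ℕ → Bool} {x : ℝ} {n : ℕ}
    (hx : x - center n ∈ orientedCore (b n)) :
    reorient b c x - center n = sign (b n) * sign (c n) * (x - center n) := by
  rw [reorient, blockIndex_eq (abs_le_one_of_mem_orientedCore hx), add_sub_cancel_left]

theorem reorient_sub_center_mem {b c : ℕ → Bool} {x : ℝ} {n : ℕ}
    (hx : x - center n ∈ orientedCore (b n)) : reorient b c x - center n ∈ orientedCore (c n) := by
  rw [mem_orientedCore, reorient_sub_center hx,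
    show ∀ s t u : ℝ, t * (s * t * u) = t * t * (s * u) by intros; ring, sign_mul_sign, one_mul]
  exact hx

theorem reorient_mem {b c : ℕ → Bool} {x : ℝ} (hx : x ∈ orientedBlocks b) :
    reorient b c x ∈ orientedBlocks c := by
  obtain ⟨n, hn⟩ := mem_orientedBlocks.1 hx
  exact mem_orientedBlocks.2 ⟨n, reorient_sub_center_mem hn⟩

theorem reorient_reorient {b c : ℕ → Bool} {x : ℝ} (hx : x ∈ orientedBlocks b) :
    reorient c b (reorient b c x) = x := by
  obtain ⟨n, hn⟩ := mem_orientedBlocks.1 hx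
  rw [← sub_left_inj (a := center n), reorient_sub_center (reorient_sub_center_mem hn),
    reorient_sub_center hn]
  calc _ = (sign (b n) * sign (b n)) * (sign (c n) * sign (c n)) * (x - center n) := by ring
    _ = _ := by simp

theorem dist_reorient_le {b c : ℕ → Bool} {x y : ℝ} (hx : x ∈ orientedBlocks b)
    (hy : y ∈ orientedBlocks b) (hxy : dist x y < 1) :
    dist (reorient b c x) (reorient b c y) ≤ dist x y := by
  obtain ⟨n, hn⟩ := mem_orientedBlocks.1 hx
  obtain ⟨m, hm⟩ := mem_orientedBlocks.1 hy
  have hn' := abs_le.1 (abs_le_one_of_mem_orientedCore hn)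
  have hm' := abs_le.1 (abs_le_one_of_mem_orientedCore hm)
  have hxy' := abs_lt.1 (Real.dist_eq x y ▸ hxy)
  obtain rfl : m = n := eq_of_abs_center_sub_center_lt (abs_lt.2 ⟨by linarith, by linarith⟩)
  rw [Real.dist_eq, Real.dist_eq, ← sub_sub_sub_cancel_right _ _ (center m),
    reorient_sub_center hn, reorient_sub_center hm, ← mul_sub, sub_sub_sub_cancel_right,
    abs_mul, abs_mul, abs_sign, abs_sign, one_mul, one_mul]

noncomputable def reorientEquiv (b c : ℕ → Bool) : orientedBlocks b ≃ orientedBlocks c where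
  toFun x := ⟨reorient b c x, reorient_mem x.2⟩
  invFun y := ⟨reorient c b y, reorient_mem y.2⟩
  left_inv x := Subtype.ext (reorient_reorient x.2)
  right_inv y := Subtype.ext (reorient_reorient y.2)

theorem uniformContinuous_reorientEquiv (b c : ℕ → Bool) :
    UniformContinuous (reorientEquiv b c) :=
  uniformContinuous_of_dist_le_of_dist_lt one_pos fun x y => dist_reorient_le x.2 y.2

end JumpBlocks

/-- There is a family of closed subsets of `ℝ`, of cardinality
continuum, whose members have no singleton connected components, and any two
distinct members of which are metrically similar but not order-isomorphic. -/
theorem stmt_4 :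
    ∃ 𝓗 : Set (Set ℝ),
      Cardinal.mk 𝓗 = Cardinal.continuum ∧
      (∀ A ∈ 𝓗, IsClosed A) ∧
      (∀ A ∈ 𝓗, ∀ x : ↥A, (connectedComponent x).Nontrivial) ∧
      (∀ A ∈ 𝓗, ∀ B ∈ 𝓗, A ≠ B →
        (∃ f : ↥A ≃ ↥B, UniformContinuous ⇑f ∧ UniformContinuous ⇑f.symm) ∧
        ¬ ∃ f : ↥A → ↥B, Function.Bijective f ∧ StrictMono f) := by
  have hinj : Function.Injective JumpBlocks.orientedBlocks := fun _ _ h =>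
    JumpBlocks.eq_of_orderIso (OrderIso.setCongr _ _ h)
  refine ⟨range JumpBlocks.orientedBlocks, ?_, ?_, ?_, ?_⟩
  · rw [Cardinal.mk_range_eq _ hinj]
    simp
  · rintro _ ⟨b, rfl⟩
    exact JumpBlocks.isClosed_orientedBlocks b
  · rintro _ ⟨b, rfl⟩ x
    obtain ⟨T, hT, hTn, hxT, hTS⟩ :=
      JumpBlocks.exists_isPreconnected_subset_orientedBlocks x.2
    exact Subtype.connectedComponent_nontrivial hT hTn hTS hxT
  · rintro _ ⟨b, rfl⟩ _ ⟨c, rfl⟩ hne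
    refine ⟨⟨JumpBlocks.reorientEquiv b c, JumpBlocks.uniformContinuous_reorientEquiv b c,
      JumpBlocks.uniformContinuous_reorientEquiv c b⟩, ?_⟩
    rintro ⟨f, hf, hmono⟩
    exact hne (congrArg _ (JumpBlocks.eq_of_orderIso (hmono.orderIsoOfSurjective f hf.2)))
end

section
/- There exists a family of infinite subsets of the unit interval [0,1], each discrete in its subspace topology, such that the family has the cardinality of the continuum and for any two distinct members Z, W of the family there is no bijection f : Z → W with both f and f⁻¹ uniformly continuous with respect to the Euclidean metric. -/
/-!
A bijection that is uniformly continuous in both directions extends to a homeomorphism of the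
closures, so it suffices to find `𝔠` many discrete sets whose closures are pairwise
non-homeomorphic compact sets.

We build them in Cantor space `ℕ → Bool`, which embeds in `[0, 1]` as the Cantor set. For
`A ⊆ ℕ` the compact set `K_A` consists of
* the even-supported sequences, a perfect set;
* the sprinkles: one bit at some `m ≡ 1 mod 4` and otherwise even bits below `m`; they are
  isolated and accumulate at every point of the perfect part;
* for `k ∈ A`, the gadgets: the anchor bit `2 k` together with `1 ≤ s ≤ k` bits at positions
  `≡ 3 mod 4` beyond it. Adding far bits shows that the gadgets with `s` bits have rank `k - s`,
  and they accumulate at the anchor.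

The isolated points of `K_A` are the sprinkles and the gadgets with `s = k`. The `j`-th derived
set of `K_A` keeps the perfect part and the gadgets with `s + j ≤ k`, so the anchor of `k` is a
limit of non-perfect points of the `j`-th derived set, i.e. lies in `omegaTrace K_A j`, exactly
when `j < k`. Hence `omegaTrace K_A j` changes from `j` to `j + 1` exactly when `j + 1 ∈ A`,
which makes `A \ {0, 1}` a topological invariant of `K_A`.
-/

open Set Filter Topology Function

section CantorBendixson

variable {X Y : Type*} [TopologicalSpace X] [TopologicalSpace Y]

def omegaDerivedSet (S : Set X) : Set X := ⋂ n, derivedSet^[n] S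

def omegaTrace (S : Set X) (j : ℕ) : Set X :=
  omegaDerivedSet S ∩ closure (derivedSet^[j] S \ omegaDerivedSet S)

theorem Topology.IsEmbedding.mem_derivedSet_image_iff {e : X → Y} (he : IsEmbedding e)
    {S : Set X} {x : X} : e x ∈ derivedSet (e '' S) ↔ x ∈ derivedSet S := by
  simp only [mem_derivedSet, accPt_iff_nhds, he.isInducing.nhds_eq_comap x, mem_comap]
  constructor
  · rintro h U ⟨V, hV, hVU⟩
    obtain ⟨_, ⟨hyV, y, hyS, rfl⟩, hne⟩ := h V hV
    exact ⟨y, ⟨hVU hyV, hyS⟩, fun h => hne (h ▸ rfl)⟩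
  · intro h V hV
    obtain ⟨y, ⟨hyV, hyS⟩, hne⟩ := h _ ⟨V, hV, Subset.rfl⟩
    exact ⟨e y, ⟨hyV, y, hyS, rfl⟩, he.injective.ne hne⟩

namespace Topology.IsClosedEmbedding

variable {e : X → Y} (he : IsClosedEmbedding e)
include he

theorem image_derivedSet (S : Set X) : e '' derivedSet S = derivedSet (e '' S) := by
  refine Subset.antisymm ?_ fun y hy => ?_
  · rintro _ ⟨x, hx, rfl⟩
    exact he.isEmbedding.mem_derivedSet_image_iff.2 hx
  · obtain ⟨x, -, rfl⟩ : y ∈ e '' closure S := by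
      rw [← he.closure_image_eq]
      exact derivedSet_subset_closure _ hy
    exact ⟨x, he.isEmbedding.mem_derivedSet_image_iff.1 hy, rfl⟩

theorem image_iterate_derivedSet (S : Set X) (n : ℕ) :
    e '' derivedSet^[n] S = derivedSet^[n] (e '' S) := by
  induction n with
  | zero => rfl
  | succ n ih => rw [iterate_succ_apply', iterate_succ_apply', ← ih, he.image_derivedSet]

theorem image_omegaDerivedSet (S : Set X) : e '' omegaDerivedSet S = omegaDerivedSet (e '' S) := by
  rw [omegaDerivedSet, he.injective.injOn.image_iInter_eq]
  exact iInter_congr (he.image_iterate_derivedSet S)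

theorem image_omegaTrace (S : Set X) (j : ℕ) : e '' omegaTrace S j = omegaTrace (e '' S) j := by
  rw [omegaTrace, omegaTrace, image_inter he.injective, ← he.closure_image_eq,
    image_sdiff he.injective, he.image_iterate_derivedSet, he.image_omegaDerivedSet]

theorem omegaTrace_range_eq_iff (i j : ℕ) :
    omegaTrace (range e) i = omegaTrace (range e) j ↔
      omegaTrace (univ : Set X) i = omegaTrace univ j := by
  rw [← image_univ, ← he.image_omegaTrace, ← he.image_omegaTrace, image_eq_image he.injective]

end Topology.IsClosedEmbedding

theorem IsClosed.omegaTrace_eq_iff_of_homeomorph {K : Set X} {L : Set Y} (hK : IsClosed K)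
    (hL : IsClosed L) (h : K ≃ₜ L) (i j : ℕ) :
    omegaTrace K i = omegaTrace K j ↔ omegaTrace L i = omegaTrace L j := by
  have hK' := hK.isClosedEmbedding_subtypeVal.omegaTrace_range_eq_iff i j
  have hL' := hL.isClosedEmbedding_subtypeVal.omegaTrace_range_eq_iff i j
  have hh := h.isClosedEmbedding.omegaTrace_range_eq_iff i j
  rw [Subtype.range_coe] at hK' hL'
  rw [h.range_coe] at hh
  rw [hK', hL', hh]

end CantorBendixson

def AbstractCompletion.ofClosure {α : Type*} [UniformSpace α] [CompleteSpace α] [T0Space α]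
    (s : Set α) : AbstractCompletion s where
  space := closure s
  coe := inclusion subset_closure
  uniformStruct := inferInstance
  complete := isClosed_closure.completeSpace_coe
  separation := inferInstance
  isUniformInducing := (isUniformInducing_val _).of_comp_iff.1 (isUniformInducing_val s)
  dense := (denseRange_inclusion_iff subset_closure).2 Subset.rfl

noncomputable def UniformEquiv.closureCongr {α β : Type*} [UniformSpace α] [CompleteSpace α]
    [T0Space α] [UniformSpace β] [CompleteSpace β] [T0Space β] {s : Set α} {t : Set β} (e : s ≃ᵤ t) :
    closure s ≃ᵤ closure t :=
  (AbstractCompletion.ofClosure s).mapEquiv (AbstractCompletion.ofClosure t) e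

section CantorSpace

variable {E : Type*} [TopologicalSpace E] [DiscreteTopology E]

theorem hasBasis_nhds_agree (f : ℕ → E) :
    (𝓝 f).HasBasis (fun _ => True) fun n => {g | ∀ i < n, g i = f i} := by
  refine ⟨fun t => ⟨fun ht => ?_, fun ⟨n, _, hn⟩ => mem_of_superset ?_ hn⟩⟩
  · rw [nhds_pi, Filter.mem_pi] at ht
    obtain ⟨I, hI, u, hu, hsub⟩ := ht
    obtain ⟨N, hN⟩ := hI.bddAbove
    refine ⟨N + 1, trivial, fun g hg => hsub fun i hi => ?_⟩
    rw [hg i (Nat.lt_succ_of_le (hN hi))]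
    exact mem_of_mem_nhds (hu i)
  · exact (PiNat.isOpen_cylinder _ f n).mem_nhds (PiNat.self_mem_cylinder f n)

variable {S : Set (ℕ → E)} {f : ℕ → E}

theorem mem_closure_iff_forall_exists_agree :
    f ∈ closure S ↔ ∀ n, ∃ g ∈ S, ∀ i < n, g i = f i :=
  (mem_closure_iff_nhds_basis (hasBasis_nhds_agree f)).trans (by simp)

theorem mem_derivedSet_iff_forall_exists_agree :
    f ∈ derivedSet S ↔ ∀ n, ∃ g ∈ S, g ≠ f ∧ ∀ i < n, g i = f i := by
  rw [mem_derivedSet, accPt_iff_nhds, (hasBasis_nhds_agree f).forall_iff]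
  · simp only [forall_const, mem_inter_iff, mem_ofPred_eq]
    exact forall_congr' fun n => ⟨fun ⟨g, ⟨hag, hg⟩, hne⟩ => ⟨g, hg, hne, hag⟩,
      fun ⟨g, hg, hne, hag⟩ => ⟨g, ⟨hag, hg⟩, hne⟩⟩
  · rintro s t hst ⟨g, hg, hne⟩
    exact ⟨g, ⟨hst hg.1, hg.2⟩, hne⟩

theorem mem_derivedSet_sep_agree (hf : f ∈ derivedSet S) (N : ℕ) :
    f ∈ derivedSet {g ∈ S | ∀ i < N, g i = f i} := by
  rw [mem_derivedSet_iff_forall_exists_agree] at hf ⊢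
  intro n
  obtain ⟨g, hg, hne, hag⟩ := hf (max n N)
  exact ⟨g, ⟨hg, fun i hi => hag i (by omega)⟩, hne, fun i hi => hag i (by omega)⟩

end CantorSpace

section BoolSequences

variable {S : Set (ℕ → Bool)} {f : ℕ → Bool}

theorem notMem_derivedSet_of_forall_agree {N : ℕ}
    (h : ∀ g ∈ S, (∀ i < N, g i = f i) → ∀ i, N ≤ i → g i = false) : f ∉ derivedSet S := by
  rw [mem_derivedSet_iff_forall_exists_agree]
  intro hf
  obtain ⟨g, hg, hne, hag⟩ := hf N
  obtain ⟨i, hi⟩ := Function.ne_iff.mp hne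
  have hNi : N ≤ i := by
    by_contra hlt
    exact hi (hag i (by omega))
  have hfi : f i = true := by
    rw [h g hg hag i hNi] at hi
    revert hi
    cases f i <;> simp
  obtain ⟨g', hg', -, hag'⟩ := hf (i + 1)
  have := h g' hg' (fun i' hi' => hag' i' (by omega)) i hNi
  rw [hag' i (by omega), hfi] at this
  exact Bool.noConfusion this

theorem exists_finset_card_lt_of_mem_derivedSet {r : ℕ}
    (hS : ∀ g ∈ S, ∃ T : Finset ℕ, T.card ≤ r ∧ ∀ i, g i = true → i ∈ T)
    (hf : f ∈ derivedSet S) : ∃ F : Finset ℕ, F.card < r ∧ ∀ i, f i = true ↔ i ∈ F := by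
  rw [mem_derivedSet_iff_forall_exists_agree] at hf
  have hwindow : ∀ B, ∃ g ∈ S, g ≠ f ∧ (∀ i ≤ B, g i = f i) ∧
      ∃ T : Finset ℕ, T.card ≤ r ∧ (∀ i, g i = true → i ∈ T) := by
    intro B
    obtain ⟨g, hg, hne, hag⟩ := hf (B + 1)
    exact ⟨g, hg, hne, fun i hi => hag i (by omega), hS g hg⟩
  have hfin : {i | f i = true}.Finite := by
    by_contra hinf
    obtain ⟨F, hF, hcard⟩ := Set.Infinite.exists_subset_card_eq hinf (r + 1)
    obtain ⟨B, hB⟩ := F.exists_le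
    obtain ⟨g, -, -, hag, T, hT, hgT⟩ := hwindow B
    have hFT : F ⊆ T := fun i hi => hgT i ((hag i (hB i hi)).trans (hF hi))
    have := Finset.card_le_card hFT
    omega
  refine ⟨hfin.toFinset, ?_, fun i => hfin.mem_toFinset.symm⟩
  obtain ⟨B, hB⟩ := hfin.toFinset.exists_le
  obtain ⟨g, -, hne, hag, T, hT, hgT⟩ := hwindow B
  have hFT : hfin.toFinset ⊆ T := fun i hi =>
    hgT i ((hag i (hB i hi)).trans (hfin.mem_toFinset.1 hi))
  obtain ⟨i, hi⟩ := Function.ne_iff.mp hne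
  have hBi : B < i := by
    by_contra hle
    exact hi (hag i (by omega))
  have hfi : f i = false := by
    by_contra hfi
    have := hB i (hfin.mem_toFinset.2 (by simpa using hfi))
    omega
  have hgi : g i = true := by simpa [hfi] using hi
  have hiF : i ∉ hfin.toFinset := fun h => by simp [hfi] at h
  exact (Finset.card_lt_card ⟨hFT, fun h => hiF (h (hgT i hgi))⟩).trans_le hT

end BoolSequences

namespace RigidFamily

def evenSupported : Set (ℕ → Bool) := {f | ∀ i, f i = true → i % 2 = 0}

def sprinkles : Set (ℕ → Bool) :=
  {f | ∃ m, m % 4 = 1 ∧ f m = true ∧ ∀ i, f i = true → i = m ∨ (i < m ∧ i % 2 = 0)}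

def IsGadget (k s : ℕ) (f : ℕ → Bool) : Prop :=
  1 ≤ s ∧ ∃ F : Finset ℕ, F.card = s + 1 ∧ 2 * k ∈ F ∧ (∀ i, f i = true ↔ i ∈ F) ∧
    ∀ i ∈ F, i ≠ 2 * k → i % 4 = 3 ∧ 2 * k < i

def gadgets (A : Set ℕ) (j : ℕ) : Set (ℕ → Bool) := {f | ∃ k ∈ A, ∃ s, s + j ≤ k ∧ IsGadget k s f}

def stage (A : Set ℕ) (j : ℕ) : Set (ℕ → Bool) := evenSupported ∪ gadgets A j

def compactModel (A : Set ℕ) : Set (ℕ → Bool) := sprinkles ∪ stage A 0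

def discreteModel (A : Set ℕ) : Set (ℕ → Bool) := sprinkles ∪ {f | ∃ k ∈ A, IsGadget k k f}

def anchor (k : ℕ) : ℕ → Bool := fun i => decide (i = 2 * k)

theorem notMem_evenSupported_of_mem_sprinkles {f : ℕ → Bool} (hf : f ∈ sprinkles) :
    f ∉ evenSupported := fun he => by
  obtain ⟨m, hm, hfm, -⟩ := hf
  have := he m hfm
  omega

namespace IsGadget

variable {k s : ℕ} {f : ℕ → Bool}

theorem apply_two_mul (h : IsGadget k s f) : f (2 * k) = true := by
  obtain ⟨-, F, -, hk, hF, -⟩ := h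
  exact (hF _).2 hk

theorem lane_three (h : IsGadget k s f) {i : ℕ} (hi : f i = true) (hik : i ≠ 2 * k) :
    i % 4 = 3 ∧ 2 * k < i := by
  obtain ⟨-, F, -, -, hF, hlane⟩ := h
  exact hlane i ((hF i).1 hi) hik

theorem eq_two_mul_of_even (h : IsGadget k s f) {i : ℕ} (hi : f i = true) (heven : i % 2 = 0) :
    i = 2 * k := by
  by_contra hik
  have := (h.lane_three hi hik).1
  omega

theorem exists_lane_three (h : IsGadget k s f) : ∃ i, f i = true ∧ i % 4 = 3 := by
  obtain ⟨hs, F, hcard, -, hF, hlane⟩ := h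
  obtain ⟨i, hiF, hik⟩ := Finset.exists_mem_ne (by omega : 1 < F.card) (2 * k)
  exact ⟨i, (hF i).2 hiF, (hlane i hiF hik).1⟩

theorem notMem_evenSupported (h : IsGadget k s f) : f ∉ evenSupported := fun he => by
  obtain ⟨i, hi, hi4⟩ := h.exists_lane_three
  have := he i hi
  omega

theorem notMem_sprinkles (h : IsGadget k s f) : f ∉ sprinkles := by
  rintro ⟨m, hm, -, hsupp⟩
  obtain ⟨i, hi, hi4⟩ := h.exists_lane_three
  rcases hsupp i hi with rfl | ⟨-, hi2⟩ <;> omega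

theorem unique {k' s' : ℕ} (h : IsGadget k s f) (h' : IsGadget k' s' f) : k = k' ∧ s = s' := by
  have hk := h'.eq_two_mul_of_even h.apply_two_mul (by omega)
  obtain ⟨-, F, hcard, -, hF, -⟩ := h
  obtain ⟨-, F', hcard', -, hF', -⟩ := h'
  have : F = F' := Finset.ext fun i => (hF i).symm.trans (hF' i)
  subst this
  omega

theorem exists_succ_near (h : IsGadget k s f) (n : ℕ) :
    ∃ g, IsGadget k (s + 1) g ∧ g ≠ f ∧ ∀ i < n, g i = f i := by
  obtain ⟨hs, F, hcard, hk, hF, hlane⟩ := h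
  obtain ⟨B, hB⟩ := F.exists_le
  obtain ⟨p, hp⟩ : ∃ p, p = 4 * (n + 2 * k + B + 1) + 3 := ⟨_, rfl⟩
  have hpF : p ∉ F := fun h => by
    have := hB p h
    omega
  refine ⟨fun i => f i || decide (i = p), ⟨by omega, insert p F, ?_, Finset.mem_insert_of_mem hk,
    fun i => ?_, fun i hi hik => ?_⟩, fun heq => hpF ?_, fun i hi => ?_⟩
  · rw [Finset.card_insert_of_notMem hpF, hcard]
  · simp [hF, or_comm]
  · rcases Finset.mem_insert.1 hi with rfl | hi
    · omega
    · exact hlane i hi hik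
  · simpa [← hF] using (congrFun heq p).symm
  · simp [show i ≠ p by omega]

end IsGadget

theorem isGadget_anchor_or {k p : ℕ} (hp : p % 4 = 3) (hkp : 2 * k < p) :
    IsGadget k 1 fun i => anchor k i || decide (i = p) := by
  refine ⟨le_rfl, {2 * k, p}, Finset.card_pair (by omega), by simp, fun i => by simp [anchor],
    fun i hi hik => ?_⟩
  simp only [Finset.mem_insert, Finset.mem_singleton] at hi
  omega


section Stages

variable {A : Set ℕ} {j : ℕ} {f g : ℕ → Bool}

theorem eq_false_of_lane_one (hg : g ∈ sprinkles ∪ stage A j) {m : ℕ} (hgm : g m = true)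
    (hm : m % 4 = 1) {i : ℕ} (hmi : m < i) : g i = false := by
  rcases hg with ⟨m', -, -, hsupp⟩ | hP | ⟨k, -, s, -, hG⟩
  · have hmm' : m = m' := by rcases hsupp m hgm with h | h <;> omega
    by_contra hgi
    rcases hsupp i (by simpa using hgi) with h | h <;> omega
  · have := hP m hgm
    omega
  · have := (hG.lane_three hgm (by omega)).1
    omega

theorem exists_isGadget_of_lane_three (hg : g ∈ sprinkles ∪ stage A j) {m : ℕ}
    (hgm : g m = true) (hm : m % 4 = 3) :
    ∃ k ∈ A, ∃ s, s + j ≤ k ∧ IsGadget k s g ∧ 2 * k < m := by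
  rcases hg with ⟨m', hm', -, hsupp⟩ | hP | ⟨k, hk, s, hs, hG⟩
  · rcases hsupp m hgm with h | h <;> omega
  · have := hP m hgm
    omega
  · exact ⟨k, hk, s, hs, hG, (hG.lane_three hgm (by omega)).2⟩

theorem exists_isGadget_of_mem_derivedSet (hf : f ∈ derivedSet (sprinkles ∪ stage A j))
    {m : ℕ} (hfm : f m = true) (hm : m % 4 = 3) :
    ∃ k ∈ A, ∃ s, s + (j + 1) ≤ k ∧ IsGadget k s f := by
  have hY := mem_derivedSet_sep_agree hf (m + 1)
  set Y := {g ∈ sprinkles ∪ stage A j | ∀ i < m + 1, g i = f i}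
  have hgadget : ∀ g ∈ Y, ∃ k ∈ A, ∃ s, s + j ≤ k ∧ IsGadget k s g ∧ 2 * k < m :=
    fun g hg => exists_isGadget_of_lane_three hg.1 ((hg.2 m (by omega)).trans hfm) hm
  obtain ⟨g₀, hg₀, -⟩ := mem_derivedSet_iff_forall_exists_agree.1 hY 0
  obtain ⟨k, hk, _, _, hG₀, hkm⟩ := hgadget g₀ hg₀
  have hf2k : f (2 * k) = true := (hg₀.2 _ (by omega)).symm.trans hG₀.apply_two_mul
  have hnear : ∀ g ∈ Y, ∃ s, s + j ≤ k ∧ IsGadget k s g := by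
    intro g hg
    obtain ⟨k', -, s, hs, hG, hk'm⟩ := hgadget g hg
    have := hG.eq_two_mul_of_even ((hg.2 _ (by omega)).trans hf2k) (by omega)
    obtain rfl : k' = k := by omega
    exact ⟨s, hs, hG⟩
  obtain ⟨F, hFcard, hF⟩ := exists_finset_card_lt_of_mem_derivedSet (r := k - j + 1)
    (fun g hg => by
      obtain ⟨s, hs, -, G, hG, -, hgG, -⟩ := hnear g hg
      exact ⟨G, by omega, fun i hi => (hgG i).1 hi⟩) hY
  have hlane : ∀ i ∈ F, i ≠ 2 * k → i % 4 = 3 ∧ 2 * k < i := by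
    intro i hi hik
    obtain ⟨g, hg, -, hag⟩ := mem_derivedSet_iff_forall_exists_agree.1 hY (i + 1)
    obtain ⟨s, -, hG⟩ := hnear g hg
    exact hG.lane_three ((hag i (by omega)).trans ((hF i).2 hi)) hik
  have h2k : 2 * k ∈ F := (hF _).1 hf2k
  have hcard : 1 < F.card := Finset.one_lt_card.2 ⟨_, h2k, m, (hF m).1 hfm, by omega⟩
  exact ⟨k, hk, F.card - 1, by omega, by omega, F, by omega, h2k, hF, hlane⟩

theorem derivedSet_sprinkles_union_stage_subset (A : Set ℕ) (j : ℕ) :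
    derivedSet (sprinkles ∪ stage A j) ⊆ stage A (j + 1) := by
  intro f hf
  by_cases h1 : ∃ m, f m = true ∧ m % 4 = 1
  · obtain ⟨m, hfm, hm⟩ := h1
    refine absurd hf (notMem_derivedSet_of_forall_agree (N := m + 1) fun g hg hag i hi => ?_)
    exact eq_false_of_lane_one hg ((hag m (by omega)).trans hfm) hm (by omega)
  by_cases h3 : ∃ m, f m = true ∧ m % 4 = 3
  · obtain ⟨m, hfm, hm⟩ := h3
    exact Or.inr (exists_isGadget_of_mem_derivedSet hf hfm hm)
  push Not at h1 h3
  exact Or.inl fun i hi => by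
    have := h1 i hi
    have := h3 i hi
    omega

theorem evenSupported_subset_derivedSet : evenSupported ⊆ derivedSet evenSupported := by
  intro f hf
  rw [mem_derivedSet_iff_forall_exists_agree]
  intro n
  refine ⟨update f (2 * n) (!f (2 * n)), fun i hi => ?_, fun h => ?_, fun i hi => ?_⟩
  · rcases eq_or_ne i (2 * n) with rfl | hin
    · omega
    · rw [update_of_ne hin] at hi
      exact hf i hi
  · simpa using congrFun h (2 * n)
  · rw [update_of_ne (by omega)]

theorem evenSupported_subset_closure_sprinkles : evenSupported ⊆ closure sprinkles := by
  intro f hf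
  rw [mem_closure_iff_forall_exists_agree]
  intro n
  refine ⟨fun i => if i < n then f i else decide (i = 4 * n + 1),
    ⟨4 * n + 1, by omega, by simp [show ¬ 4 * n + 1 < n by omega], fun i hi => ?_⟩,
    fun i hi => if_pos hi⟩
  dsimp only at hi
  split_ifs at hi with hin
  · exact Or.inr ⟨by omega, hf i hi⟩
  · exact Or.inl (by simpa using hi)

theorem derivedSet_stage (A : Set ℕ) (j : ℕ) : derivedSet (stage A j) = stage A (j + 1) := by
  refine Subset.antisymm ((derivedSet_mono _ _ subset_union_right).trans
    (derivedSet_sprinkles_union_stage_subset A j)) ?_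
  rintro f (hf | ⟨k, hk, s, hs, hG⟩)
  · exact derivedSet_mono _ _ subset_union_left (evenSupported_subset_derivedSet hf)
  · rw [mem_derivedSet_iff_forall_exists_agree]
    intro n
    obtain ⟨g, hg, hne, hag⟩ := hG.exists_succ_near n
    exact ⟨g, Or.inr ⟨k, hk, s + 1, by omega, hg⟩, hne, hag⟩

theorem derivedSet_compactModel (A : Set ℕ) : derivedSet (compactModel A) = stage A 1 :=
  Subset.antisymm (derivedSet_sprinkles_union_stage_subset A 0)
    (derivedSet_stage A 0 ▸ derivedSet_mono _ _ subset_union_right)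

theorem iterate_derivedSet_compactModel (A : Set ℕ) (j : ℕ) :
    derivedSet^[j + 1] (compactModel A) = stage A (j + 1) := by
  induction j with
  | zero => exact derivedSet_compactModel A
  | succ j ih => rw [iterate_succ_apply', ih, derivedSet_stage]

theorem stage_subset_compactModel (A : Set ℕ) (j : ℕ) : stage A j ⊆ compactModel A :=
  fun _ hf => Or.inr (hf.imp_right fun ⟨k, hk, s, hs, hG⟩ => ⟨k, hk, s, by omega, hG⟩)

theorem omegaDerivedSet_compactModel (A : Set ℕ) :
    omegaDerivedSet (compactModel A) = evenSupported := by
  refine Subset.antisymm (fun f hf => ?_) (subset_iInter fun n => ?_)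
  · have hmem : ∀ j, f ∈ stage A (j + 1) := fun j =>
      iterate_derivedSet_compactModel A j ▸ mem_iInter.1 hf (j + 1)
    obtain hP | ⟨k, -, s, -, hG⟩ := hmem 0
    · exact hP
    obtain hP | ⟨k', -, s', hs', hG'⟩ := hmem k
    · exact absurd hP hG.notMem_evenSupported
    · obtain ⟨rfl, rfl⟩ := hG.unique hG'
      omega
  · cases n with
    | zero => exact subset_union_left.trans (stage_subset_compactModel A 0)
    | succ j => exact (iterate_derivedSet_compactModel A j).symm ▸ subset_union_left

theorem stage_diff_evenSupported (A : Set ℕ) (j : ℕ) :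
    stage A j \ evenSupported = gadgets A j := by
  ext f
  refine ⟨fun ⟨hf, hP⟩ => hf.resolve_left hP, fun hf => ⟨Or.inr hf, ?_⟩⟩
  obtain ⟨k, -, s, -, hG⟩ := hf
  exact hG.notMem_evenSupported

theorem evenSupported_inter_closure_gadgets_subset (A : Set ℕ) (j : ℕ) :
    evenSupported ∩ closure (gadgets A j) ⊆
      insert (fun _ => false) (anchor '' {k ∈ A | j < k}) := by
  rintro f ⟨hP, hf⟩
  rw [mem_closure_iff_forall_exists_agree] at hf
  by_cases hzero : ∀ i, f i = false
  · exact Or.inl (funext hzero)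
  push Not at hzero
  obtain ⟨e, he⟩ := hzero
  simp only [ne_eq, Bool.not_eq_false] at he
  have hnear : ∀ n, e < n → ∃ k ∈ A, j < k ∧ ∀ i < n, f i = true → i = 2 * k := by
    intro n hn
    obtain ⟨g, ⟨k, hk, s, hs, hG⟩, hag⟩ := hf n
    exact ⟨k, hk, by have := hG.1; omega,
      fun i hi hfi => hG.eq_two_mul_of_even ((hag i hi).trans hfi) (hP i hfi)⟩
  obtain ⟨k, hk, hjk, hek⟩ := hnear (e + 1) (by omega)
  obtain rfl := hek e (by omega) he
  refine Or.inr ⟨k, ⟨hk, hjk⟩, funext fun i => Bool.eq_iff_iff.2 ?_⟩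
  simp only [anchor, decide_eq_true_eq]
  refine ⟨fun hi => hi ▸ he, fun hfi => ?_⟩
  obtain ⟨k', -, -, hk'⟩ := hnear (i + 2 * k + 1) (by omega)
  have := hk' i (by omega) hfi
  have := hk' (2 * k) (by omega) he
  omega

theorem insert_anchor_subset_closure_gadgets (hA : A.Infinite) :
    insert (fun _ => false) (anchor '' {k ∈ A | j < k}) ⊆ closure (gadgets A j) := by
  rintro f (rfl | ⟨k, ⟨hk, hjk⟩, rfl⟩) <;> rw [mem_closure_iff_forall_exists_agree] <;> intro n
  · obtain ⟨k, hk, hnk⟩ := hA.exists_gt (n + j + 1)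
    refine ⟨_, ⟨k, hk, 1, by omega,
      isGadget_anchor_or (p := 4 * k + 3) (by omega) (by omega)⟩, fun i hi => ?_⟩
    simp only [anchor, Bool.or_eq_false_iff, decide_eq_false_iff_not]
    omega
  · refine ⟨_, ⟨k, hk, 1, by omega,
      isGadget_anchor_or (p := 4 * (n + k) + 3) (by omega) (by omega)⟩, fun i hi => ?_⟩
    simp [show i ≠ 4 * (n + k) + 3 by omega]

theorem insert_anchor_subset_evenSupported (A : Set ℕ) (j : ℕ) :
    insert (fun _ => false) (anchor '' {k ∈ A | j < k}) ⊆ evenSupported := by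
  rintro f (rfl | ⟨k, -, rfl⟩) i hi
  · simp at hi
  · simp only [anchor, decide_eq_true_eq] at hi
    omega

theorem omegaTrace_compactModel (hA : A.Infinite) (hj : 1 ≤ j) :
    omegaTrace (compactModel A) j = insert (fun _ => false) (anchor '' {k ∈ A | j < k}) := by
  obtain ⟨j, rfl⟩ : ∃ j', j = j' + 1 := ⟨j - 1, by omega⟩
  rw [omegaTrace, omegaDerivedSet_compactModel, iterate_derivedSet_compactModel,
    stage_diff_evenSupported]
  exact Subset.antisymm (evenSupported_inter_closure_gadgets_subset A _)
    (subset_inter (insert_anchor_subset_evenSupported A _)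
      (insert_anchor_subset_closure_gadgets hA))

theorem omegaTrace_compactModel_eq_iff (hA : A.Infinite) (hj : 1 ≤ j) :
    omegaTrace (compactModel A) j = omegaTrace (compactModel A) (j + 1) ↔ j + 1 ∉ A := by
  rw [omegaTrace_compactModel hA hj, omegaTrace_compactModel hA (by omega)]
  refine ⟨fun h hjA => ?_, fun hjA => ?_⟩
  · have hmem : anchor (j + 1) ∈ insert (fun _ => false) (anchor '' {k ∈ A | j + 1 < k}) :=
      h ▸ Or.inr ⟨j + 1, ⟨hjA, by omega⟩, rfl⟩
    rcases hmem with h0 | ⟨k, ⟨-, hk⟩, hkj⟩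
    · simpa [anchor] using congrFun h0 (2 * (j + 1))
    · have := congrFun hkj (2 * k)
      simp [anchor] at this
      omega
  · congr 2
    ext k
    refine ⟨fun ⟨hk, hjk⟩ => ⟨hk, ?_⟩, fun ⟨hk, hjk⟩ => ⟨hk, by omega⟩⟩
    rcases eq_or_ne k (j + 1) with rfl | hne
    · exact absurd hk hjA
    · omega

theorem IsGadget.mem_closure_discreteModel {k s : ℕ} (hk : k ∈ A) (hG : IsGadget k s f)
    (hs : s ≤ k) : f ∈ closure (discreteModel A) := by
  obtain ⟨d, hd⟩ : ∃ d, k - s = d := ⟨_, rfl⟩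
  induction d generalizing s f with
  | zero => exact subset_closure (Or.inr ⟨k, hk, by rwa [show s = k by omega] at hG⟩)
  | succ d ih =>
    have hnext : {g | IsGadget k (s + 1) g} ⊆ closure (discreteModel A) :=
      fun g hg => ih hg (by omega) (by omega)
    refine closure_minimal hnext isClosed_closure
      (mem_closure_iff_forall_exists_agree.2 fun n => ?_)
    obtain ⟨g, hg, -, hag⟩ := hG.exists_succ_near n
    exact ⟨g, hg, hag⟩

theorem discreteModel_subset_compactModel (A : Set ℕ) : discreteModel A ⊆ compactModel A :=
  union_subset_union_right _ fun _ ⟨k, hk, hG⟩ => Or.inr ⟨k, hk, k, by omega, hG⟩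

theorem closure_discreteModel (A : Set ℕ) : closure (discreteModel A) = compactModel A := by
  refine Subset.antisymm ?_ ?_
  · rw [closure_eq_self_union_derivedSet]
    refine union_subset (discreteModel_subset_compactModel A) ?_
    calc derivedSet (discreteModel A) ⊆ derivedSet (compactModel A) :=
          derivedSet_mono _ _ (discreteModel_subset_compactModel A)
      _ = stage A 1 := derivedSet_compactModel A
      _ ⊆ compactModel A := stage_subset_compactModel A 1
  · rintro f (hf | hf | ⟨k, hk, s, hs, hG⟩)
    · exact subset_closure (Or.inl hf)
    · exact closure_mono subset_union_left (evenSupported_subset_closure_sprinkles hf)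
    · exact hG.mem_closure_discreteModel hk (by omega)

theorem notMem_derivedSet_discreteModel (hf : f ∈ discreteModel A) :
    f ∉ derivedSet (discreteModel A) := by
  intro hder
  have hstage : f ∈ stage A 1 := derivedSet_compactModel A ▸
    derivedSet_mono _ _ (discreteModel_subset_compactModel A) hder
  rcases hf with hspr | ⟨k, -, hG⟩ <;> rcases hstage with hP | ⟨k', -, s, hs, hG'⟩
  · exact notMem_evenSupported_of_mem_sprinkles hspr hP
  · exact hG'.notMem_sprinkles hspr
  · exact hG.notMem_evenSupported hP
  · obtain ⟨rfl, rfl⟩ := hG.unique hG'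
    omega

theorem discreteModel_infinite (A : Set ℕ) : (discreteModel A).Infinite := by
  intro hfin
  have hzero : (fun _ => false) ∈ discreteModel A := by
    rw [← hfin.isClosed.closure_eq, closure_discreteModel]
    exact Or.inr (Or.inl fun i hi => by simp at hi)
  rcases hzero with ⟨m, -, hm, -⟩ | ⟨k, -, hG⟩
  · simp at hm
  · simpa using hG.apply_two_mul

end Stages

noncomputable def cantorEmbedding (f : ℕ → Bool) : ℝ := cantorSetHomeomorphNatToBool.symm f

theorem isClosedEmbedding_cantorEmbedding : IsClosedEmbedding cantorEmbedding :=
  isClosed_cantorSet.isClosedEmbedding_subtypeVal.comp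
    cantorSetHomeomorphNatToBool.symm.isClosedEmbedding

def modelSet (A : Set ℕ) : Set ℝ := cantorEmbedding '' discreteModel A

theorem modelSet_subset_Icc (A : Set ℕ) : modelSet A ⊆ Icc 0 1 := by
  rintro _ ⟨f, -, rfl⟩
  exact cantorSet_subset_unitInterval (Subtype.prop _)

theorem modelSet_infinite (A : Set ℕ) : (modelSet A).Infinite :=
  (discreteModel_infinite A).image isClosedEmbedding_cantorEmbedding.injective.injOn

theorem discreteTopology_modelSet (A : Set ℕ) : DiscreteTopology (modelSet A) := by
  refine discreteTopology_of_noAccPts ?_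
  rintro _ ⟨f, hf, rfl⟩ hacc
  exact notMem_derivedSet_discreteModel hf
    (isClosedEmbedding_cantorEmbedding.isEmbedding.mem_derivedSet_image_iff.1 hacc)

theorem omegaTrace_closure_modelSet_eq_iff {A : Set ℕ} (hA : A.Infinite) {j : ℕ} (hj : 1 ≤ j) :
    omegaTrace (closure (modelSet A)) j = omegaTrace (closure (modelSet A)) (j + 1) ↔
      j + 1 ∉ A := by
  have he := isClosedEmbedding_cantorEmbedding
  rw [modelSet, he.closure_image_eq, closure_discreteModel, ← he.image_omegaTrace,
    ← he.image_omegaTrace, image_eq_image he.injective]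
  exact omegaTrace_compactModel_eq_iff hA hj

theorem eq_of_uniformEquiv {A B : Set ℕ} (hA : A.Infinite) (hB : B.Infinite)
    (hA2 : ∀ k ∈ A, 2 ≤ k) (hB2 : ∀ k ∈ B, 2 ≤ k) (Φ : modelSet A ≃ᵤ modelSet B) : A = B := by
  have h := Φ.closureCongr.toHomeomorph
  ext k
  by_cases hk : 2 ≤ k
  · obtain ⟨j, rfl⟩ : ∃ j, k = j + 1 := ⟨k - 1, by omega⟩
    rw [← not_iff_not, ← omegaTrace_closure_modelSet_eq_iff hA (by omega),
      ← omegaTrace_closure_modelSet_eq_iff hB (by omega)]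
    exact isClosed_closure.omegaTrace_eq_iff_of_homeomorph isClosed_closure h j (j + 1)
  · exact iff_of_false (fun h => hk (hA2 k h)) (fun h => hk (hB2 k h))

def code (B : Set ℕ) : Set ℕ := (fun b => 2 * b + 2) '' B ∪ range fun c => 2 * c + 3

theorem code_infinite (B : Set ℕ) : (code B).Infinite :=
  (infinite_range_of_injective fun a b (h : 2 * a + 3 = 2 * b + 3) => by omega).mono
    subset_union_right

theorem two_le_of_mem_code {B : Set ℕ} {k : ℕ} (hk : k ∈ code B) : 2 ≤ k := by
  rcases hk with ⟨b, -, rfl⟩ | ⟨c, rfl⟩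
  · show 2 ≤ 2 * b + 2
    omega
  · show 2 ≤ 2 * c + 3
    omega

theorem mul_two_add_two_mem_code_iff {B : Set ℕ} {b : ℕ} : 2 * b + 2 ∈ code B ↔ b ∈ B := by
  simp only [code, mem_union, mem_image, mem_range]
  refine ⟨?_, fun hb => Or.inl ⟨b, hb, rfl⟩⟩
  rintro (⟨b', hb', h⟩ | ⟨c, h⟩)
  · rwa [show b = b' by omega]
  · omega

theorem code_injective : Injective code := fun B B' h => by
  ext b
  rw [← mul_two_add_two_mem_code_iff, h, mul_two_add_two_mem_code_iff]

theorem eq_of_uniformEquiv_code {B B' : Set ℕ} (Φ : modelSet (code B) ≃ᵤ modelSet (code B')) :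
    B = B' :=
  code_injective <| eq_of_uniformEquiv (code_infinite B) (code_infinite B')
    (fun _ => two_le_of_mem_code) (fun _ => two_le_of_mem_code) Φ

end RigidFamily

/-- There is a family of infinite discrete subsets of `[0,1]`,
of cardinality continuum, such that between distinct members there is no
bijection that is uniformly continuous in both directions. -/
theorem stmt_9 :
    ∃ 𝓕 : Set (Set ℝ),
      Cardinal.mk 𝓕 = Cardinal.continuum ∧
      (∀ Z ∈ 𝓕, Z ⊆ Set.Icc (0 : ℝ) 1) ∧
      (∀ Z ∈ 𝓕, Z.Infinite) ∧
      (∀ Z ∈ 𝓕, DiscreteTopology ↥Z) ∧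
      (∀ Z ∈ 𝓕, ∀ W ∈ 𝓕, Z ≠ W →
        ¬ ∃ f : ↥Z ≃ ↥W, UniformContinuous ⇑f ∧ UniformContinuous ⇑f.symm) := by
  have hinj : Injective fun B => RigidFamily.modelSet (RigidFamily.code B) :=
    fun B B' h => RigidFamily.eq_of_uniformEquiv_code (UniformEquiv.setCongr h)
  refine ⟨range fun B => RigidFamily.modelSet (RigidFamily.code B), ?_, ?_, ?_, ?_, ?_⟩
  · rw [Cardinal.mk_range_eq _ hinj, Cardinal.mk_set, Cardinal.mk_nat, Cardinal.two_power_aleph0]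
  · rintro _ ⟨B, rfl⟩
    exact RigidFamily.modelSet_subset_Icc _
  · rintro _ ⟨B, rfl⟩
    exact RigidFamily.modelSet_infinite _
  · rintro _ ⟨B, rfl⟩
    exact RigidFamily.discreteTopology_modelSet _
  · rintro _ ⟨B, rfl⟩ _ ⟨B', rfl⟩ hne ⟨Φ, hΦ, hΦ'⟩
    exact hne (by rw [RigidFamily.eq_of_uniformEquiv_code (B := B) (B' := B') ⟨Φ, hΦ, hΦ'⟩])
end

section
/- There exists a family of infinite, closed, discrete subsets of ℝ such that the family has the cardinality of the continuum and for any two distinct members A, B of the family there is no bijection f : A → B with both f and f⁻¹ uniformly continuous with respect to the Euclidean metric. -/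
/-!
Encode `r : ℕ → Bool` by a set of reals made of finite blocks: block `k` sits at `2k`, has
diameter `< 1/(k+1)`, and has `2k + 2` or `2k + 3` points according to `r (unpair k).1`.
Such a set is closed and discrete because every bounded interval meets finitely many blocks.
Blocks are `1` apart while their diameters tend to `0`, so a bijection that is uniformly
continuous in both directions maps every far block into one block and back; by injectivity
the two blocks have the same number of points, which forces equal indices and equal bits.
Every `r n` is read off infinitely many blocks, so `r` is recovered.
-/

open Set Filter Topology

theorem isClosed_and_isDiscrete_of_forall_finite_inter {X : Type*} [TopologicalSpace X]
    [T1Space X] {S : Set X} (h : ∀ x, ∃ t ∈ 𝓝 x, (t ∩ S).Finite) :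
    IsClosed S ∧ IsDiscrete S := by
  rw [isClosed_and_discrete_iff]
  have hS : Sᶜ ∈ codiscreteWithin univ :=
    codiscreteWithin_iff_locallyFiniteComplementWithin.2 fun x _ ↦ by simpa using h x
  simpa using mem_codiscreteWithin.1 hS

namespace BlockSet

def block (c : ℕ → ℕ) (k : ℕ) : Set ℝ :=
  (fun j : ℕ ↦ 2 * k + j / (c k * (k + 1))) '' Iio (c k)

def blockSet (c : ℕ → ℕ) : Set ℝ := ⋃ k, block c k

variable {c c' : ℕ → ℕ}

lemma offset_nonneg_lt {k j : ℕ} (hj : j < c k) :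
    0 ≤ (j / (c k * (k + 1)) : ℝ) ∧ (j / (c k * (k + 1)) : ℝ) < 1 / (k + 1) := by
  have hc : (0 : ℝ) < c k := by exact_mod_cast (Nat.zero_le j).trans_lt hj
  refine ⟨by positivity, ?_⟩
  rw [div_lt_div_iff₀ (by positivity) (by positivity)]
  have : (j : ℝ) < c k := by exact_mod_cast hj
  nlinarith

lemma block_subset_Ico (k : ℕ) : block c k ⊆ Ico (2 * k : ℝ) (2 * k + 1) := by
  rintro _ ⟨j, hj, rfl⟩
  obtain ⟨h₀, h₁⟩ := offset_nonneg_lt hj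
  have : 1 / ((k : ℝ) + 1) ≤ 1 := by
    rw [div_le_one (by positivity)]; linarith [k.cast_nonneg (α := ℝ)]
  exact ⟨by linarith, by linarith⟩

lemma dist_lt_of_mem_block {k : ℕ} {x y : ℝ} (hx : x ∈ block c k) (hy : y ∈ block c k) :
    dist x y < 1 / (k + 1) := by
  obtain ⟨j, hj, rfl⟩ := hx
  obtain ⟨j', hj', rfl⟩ := hy
  have := offset_nonneg_lt hj
  have := offset_nonneg_lt hj'
  rw [Real.dist_eq, abs_sub_lt_iff]
  constructor <;> linarith

lemma one_le_dist_of_mem_block {k k' : ℕ} {x y : ℝ} (hk : k ≠ k') (hx : x ∈ block c k)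
    (hy : y ∈ block c' k') : 1 ≤ dist x y := by
  obtain ⟨hx₀, hx₁⟩ := block_subset_Ico k hx
  obtain ⟨hy₀, hy₁⟩ := block_subset_Ico k' hy
  rw [Real.dist_eq, le_abs]
  rcases hk.lt_or_gt with h | h
  · have : (k : ℝ) + 1 ≤ k' := by exact_mod_cast h
    right; linarith
  · have : (k' : ℝ) + 1 ≤ k := by exact_mod_cast h
    left; linarith

lemma eq_of_mem_block {k k' : ℕ} {x : ℝ} (hx : x ∈ block c k) (hx' : x ∈ block c' k') :
    k = k' := by
  by_contra hk
  exact (one_le_dist_of_mem_block hk hx hx').not_gt (by simp)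

lemma base_mem_block {k : ℕ} (hk : 0 < c k) : (2 * k : ℝ) ∈ block c k :=
  ⟨0, hk, by simp⟩

lemma ncard_block (k : ℕ) : (block c k).ncard = c k := by
  refine (InjOn.ncard_image fun j hj j' _ h ↦ ?_).trans (by simp)
  have hc : (c k : ℝ) * (k + 1) ≠ 0 := by
    have : (0 : ℝ) < c k := by exact_mod_cast (Nat.zero_le j).trans_lt hj
    positivity
  simpa [div_left_inj' hc] using h

lemma block_finite (k : ℕ) : (block c k).Finite := (finite_Iio _).image _

lemma infinite_blockSet (hc : ∀ k, 0 < c k) : (blockSet c).Infinite :=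
  infinite_of_injective_forall_mem (f := fun k : ℕ ↦ (2 * k : ℝ)) (fun k k' h ↦ by simpa using h)
    fun k ↦ mem_iUnion_of_mem k (base_mem_block (hc k))

lemma isClosed_and_isDiscrete_blockSet (c : ℕ → ℕ) :
    IsClosed (blockSet c) ∧ IsDiscrete (blockSet c) := by
  refine isClosed_and_isDiscrete_of_forall_finite_inter fun x ↦ ?_
  obtain ⟨N, hN⟩ := exists_nat_gt x
  refine ⟨Iio (2 * N), Iio_mem_nhds (by linarith [(N.cast_nonneg : (0 : ℝ) ≤ N)]), ?_⟩
  refine ((finite_Iio N).biUnion fun k _ ↦ block_finite (c := c) k).subset ?_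
  rintro y ⟨hyN, hy⟩
  obtain ⟨k, hk⟩ := mem_iUnion.1 hy
  have : (2 * k : ℝ) < 2 * N := (block_subset_Ico k hk).1.trans_lt hyN
  exact mem_biUnion (by exact_mod_cast (by linarith : (k : ℝ) < N)) hk

/-- A far block has diameter `< δ`, while distinct blocks are `1` apart. -/
lemma eventually_exists_mapsTo_block {f : blockSet c → blockSet c'} (hf : UniformContinuous f) :
    ∀ᶠ k in atTop, ∃ i, ∀ x : blockSet c, ↑x ∈ block c k → ↑(f x) ∈ block c' i := by
  obtain ⟨δ, hδ, hfδ⟩ := Metric.uniformContinuous_iff.1 hf 1 one_pos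
  obtain ⟨N, hN⟩ := exists_nat_one_div_lt hδ
  filter_upwards [eventually_ge_atTop N] with k hk
  rcases (block c k).eq_empty_or_nonempty with hempty | ⟨x₀, hx₀⟩
  · exact ⟨0, fun x hx ↦ by simp [hempty] at hx⟩
  set y₀ : blockSet c := ⟨x₀, mem_iUnion_of_mem k hx₀⟩
  obtain ⟨i, hi⟩ := mem_iUnion.1 (f y₀).2
  refine ⟨i, fun x hx ↦ ?_⟩
  obtain ⟨i', hi'⟩ := mem_iUnion.1 (f x).2
  have hNk : 1 / ((k : ℝ) + 1) ≤ 1 / (N + 1) := by gcongr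
  have hclose : dist (f x) (f y₀) < 1 :=
    hfδ (((dist_lt_of_mem_block hx hx₀).trans_le hNk).trans hN)
  obtain rfl : i' = i := by
    by_contra hne
    exact (one_le_dist_of_mem_block hne hi' hi).not_gt hclose
  exact hi'

lemma le_of_mapsTo_block {f : blockSet c → blockSet c'} (hf : Function.Injective f) {k i : ℕ}
    (h : ∀ x : blockSet c, ↑x ∈ block c k → ↑(f x) ∈ block c' i) : c k ≤ c' i := by
  have hk : (Subtype.val ⁻¹' block c k : Set (blockSet c)).ncard = c k := by
    rw [ncard_preimage_of_injective_subset_range Subtype.val_injective (by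
      rw [Subtype.range_coe]; exact subset_iUnion _ k), ncard_block]
  rw [← hk, ← ncard_block (c := c') i]
  exact ncard_le_ncard_of_injOn _ h (Subtype.val_injective.comp hf).injOn (block_finite i)

def size (b : ℕ → Bool) (k : ℕ) : ℕ := if b k then 2 * k + 3 else 2 * k + 2

section Size

variable {b b' : ℕ → Bool} {k i : ℕ}

lemma size_pos : 0 < size b k := by
  unfold size; split_ifs <;> omega

lemma le_of_size_le (h : size b k ≤ size b' i) : k ≤ i := by
  unfold size at h; split_ifs at h <;> omega

lemma eq_of_size_eq (h : size b k = size b' i) : k = i ∧ b k = b' i := by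
  obtain rfl : k = i := (le_of_size_le h.le).antisymm (le_of_size_le h.ge)
  refine ⟨rfl, ?_⟩
  revert h
  unfold size
  cases b k <;> cases b' k <;> simp

end Size

theorem eventually_eq_of_uniformEquiv {b b' : ℕ → Bool}
    (e : blockSet (size b) ≃ᵤ blockSet (size b')) : ∀ᶠ k in atTop, b k = b' k := by
  obtain ⟨N, hN⟩ := eventually_atTop.1 (eventually_exists_mapsTo_block e.symm.uniformContinuous)
  filter_upwards [eventually_exists_mapsTo_block e.uniformContinuous, eventually_ge_atTop N]
    with k ⟨i, hi⟩ hkN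
  have hle : size b k ≤ size b' i := le_of_mapsTo_block e.injective hi
  obtain ⟨j, hj⟩ := hN i (hkN.trans (le_of_size_le hle))
  have hbase : (2 * k : ℝ) ∈ block (size b) k := base_mem_block size_pos
  set x₀ : blockSet (size b) := ⟨2 * k, mem_iUnion_of_mem k hbase⟩
  obtain rfl : j = k := eq_of_mem_block (by simpa using hj (e x₀) (hi x₀ hbase)) hbase
  obtain ⟨rfl, h⟩ := eq_of_size_eq (hle.antisymm (le_of_mapsTo_block e.symm.injective hj))
  exact h

lemma eq_of_eventually_comp_unpair {r r' : ℕ → Bool}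
    (h : ∀ᶠ k in atTop, r (Nat.unpair k).1 = r' (Nat.unpair k).1) : r = r' := by
  obtain ⟨N, hN⟩ := eventually_atTop.1 h
  funext n
  simpa using hN (Nat.pair n N) (Nat.right_le_pair n N)

def codeSet (r : ℕ → Bool) : Set ℝ := blockSet (size fun k ↦ r (Nat.unpair k).1)

theorem eq_of_uniformEquiv {r r' : ℕ → Bool} (e : codeSet r ≃ᵤ codeSet r') : r = r' :=
  eq_of_eventually_comp_unpair (eventually_eq_of_uniformEquiv e)

lemma codeSet_injective : Function.Injective codeSet :=
  fun _ _ h ↦ eq_of_uniformEquiv (UniformEquiv.setCongr h)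

end BlockSet

open BlockSet in
/-- There is a family of infinite, closed, discrete subsets of `ℝ`,
of cardinality continuum, such that between distinct members there is no bijection
that is uniformly continuous in both directions. -/
theorem stmt_10 :
    ∃ 𝓕 : Set (Set ℝ),
      Cardinal.mk 𝓕 = Cardinal.continuum ∧
      (∀ A ∈ 𝓕, A.Infinite) ∧
      (∀ A ∈ 𝓕, IsClosed A) ∧
      (∀ A ∈ 𝓕, DiscreteTopology ↥A) ∧
      (∀ A ∈ 𝓕, ∀ B ∈ 𝓕, A ≠ B →
        ¬ ∃ f : ↥A ≃ ↥B, UniformContinuous ⇑f ∧ UniformContinuous ⇑f.symm) := by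
  refine ⟨range codeSet, ?_, ?_, ?_, ?_, ?_⟩
  · rw [Cardinal.mk_range_eq _ codeSet_injective, ← Cardinal.two_power_aleph0]
    simp
  · rintro _ ⟨r, rfl⟩
    exact infinite_blockSet fun _ ↦ size_pos
  · rintro _ ⟨r, rfl⟩
    exact (isClosed_and_isDiscrete_blockSet _).1
  · rintro _ ⟨r, rfl⟩
    exact (isClosed_and_isDiscrete_blockSet _).2.to_subtype
  · rintro _ ⟨r, rfl⟩ _ ⟨r', rfl⟩ hne ⟨f, hf, hg⟩
    exact hne (congrArg codeSet (eq_of_uniformEquiv ⟨f, hf, hg⟩))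
end
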